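/- arXiv:2009.08164 — 8 statements merged into one kernel-verified Lean document; each statement's English description precedes it below -/
import Mathlib

section
/- For every k, l ≥ 1 and d ≥ 2, every real-valued array (matrix) of size (k+l-1) × ((d-1)^C(k+l, k) + 1) contains either a subarray of size k × d whose columns form an increasing sequence of vectors in R^k, or a subarray of size l × d whose columns form a decreasing sequence of vectors in R^l. -/
/-!
Colour each pair of columns `x < y` by a set of rows on which column `y` dominates column `x`
(a `k`-set) or is dominated by it (an `l`-set); since there are only `k + l - 1` rows, one of the
two always exists, and there are `C(k+l-1, k) + C(k+l-1, l) = C(k+l, k)` colours. Each colour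
relation is transitive, so this is a multicolour Erdős–Szekeres situation: labelling a column by
the lengths of the longest monochromatic chains ending at it in each colour is injective (the
colour of a pair `x < y` makes its chain at `y` strictly longer than at `x`), so more than
`(d-1)^C(k+l,k)` columns force a monochromatic chain of `d` columns.
-/

section Chains

variable {α : Type*} [LinearOrder α]

def IsAscendingChain (R : α → α → Prop) (s : Finset α) : Prop :=
  ∀ x ∈ s, ∀ y ∈ s, x < y → R x y

lemma IsAscendingChain.mono {R : α → α → Prop} {s t : Finset α} (ht : IsAscendingChain R t)
    (hst : s ⊆ t) : IsAscendingChain R s :=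
  fun x hx y hy => ht x (hst hx) y (hst hy)

lemma IsAscendingChain.insert_of_lt {R : α → α → Prop} (hR : IsTrans α R) {s : Finset α}
    {x y : α} (hs : IsAscendingChain R s) (hx : x ∈ s) (hsx : ∀ z ∈ s, z ≤ x) (hxy : x < y)
    (hRxy : R x y) : IsAscendingChain R (insert y s) := by
  have hRy : ∀ z ∈ s, R z y := fun z hz =>
    (hsx z hz).lt_or_eq.elim (fun h => hR.trans _ _ _ (hs z hz x hx h) hRxy) (fun h => h ▸ hRxy)
  intro a ha b hb hab
  rw [Finset.mem_insert] at ha hb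
  rcases ha with rfl | ha <;> rcases hb with rfl | hb
  · exact absurd hab (lt_irrefl _)
  · exact absurd ((hsx b hb).trans_lt hxy) hab.not_gt
  · exact hRy a ha
  · exact hs a ha b hb hab

variable [Fintype α]

open Classical in
noncomputable def chainHeight (R : α → α → Prop) (x : α) : ℕ :=
  (Finset.univ.filter fun s : Finset α => IsAscendingChain R s ∧ x ∈ s ∧ ∀ y ∈ s, y ≤ x).sup
    Finset.card

lemma exists_card_eq_chainHeight (R : α → α → Prop) (x : α) :
    ∃ s : Finset α, IsAscendingChain R s ∧ x ∈ s ∧ (∀ y ∈ s, y ≤ x) ∧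
      s.card = chainHeight R x := by
  classical
  obtain ⟨s, hs, hsup⟩ := Finset.exists_mem_eq_sup
    (Finset.univ.filter fun s : Finset α => IsAscendingChain R s ∧ x ∈ s ∧ ∀ y ∈ s, y ≤ x)
    ⟨{x}, Finset.mem_filter.mpr ⟨Finset.mem_univ _, by simp [IsAscendingChain], by simp, by simp⟩⟩
    Finset.card
  simp only [Finset.mem_filter, Finset.mem_univ, true_and] at hs
  exact ⟨s, hs.1, hs.2.1, hs.2.2, by rw [chainHeight, hsup]⟩

lemma card_le_chainHeight {R : α → α → Prop} {s : Finset α} {x : α}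
    (hs : IsAscendingChain R s) (hx : x ∈ s) (hsx : ∀ y ∈ s, y ≤ x) :
    s.card ≤ chainHeight R x := by
  classical
  exact Finset.le_sup (f := Finset.card) (Finset.mem_filter.mpr ⟨Finset.mem_univ _, hs, hx, hsx⟩)

lemma one_le_chainHeight (R : α → α → Prop) (x : α) : 1 ≤ chainHeight R x :=
  card_le_chainHeight (s := {x}) (by simp [IsAscendingChain]) (by simp) (by simp)

lemma chainHeight_lt_chainHeight {R : α → α → Prop} (hR : IsTrans α R) {x y : α}
    (hxy : x < y) (hRxy : R x y) : chainHeight R x < chainHeight R y := by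
  obtain ⟨s, hs, hx, hsx, hcard⟩ := exists_card_eq_chainHeight R x
  have hys : y ∉ s := fun hy => (hsx y hy).not_gt hxy
  have hle : ∀ z ∈ insert y s, z ≤ y := by
    simp only [Finset.mem_insert, forall_eq_or_imp]
    exact ⟨le_rfl, fun z hz => (hsx z hz).trans hxy.le⟩
  calc chainHeight R x < (insert y s).card := by rw [Finset.card_insert_of_notMem hys]; omega
    _ ≤ chainHeight R y :=
      card_le_chainHeight (hs.insert_of_lt hR hx hsx hxy hRxy) (Finset.mem_insert_self y s) hle

variable {ι : Type*} [Fintype ι]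

theorem exists_isAscendingChain_of_pow_lt (R : ι → α → α → Prop) (hR : ∀ t, IsTrans α (R t))
    (hcov : ∀ x y, x < y → ∃ t, R t x y) {m : ℕ}
    (hm : m ^ Fintype.card ι < Fintype.card α) :
    ∃ t, ∃ s : Finset α, IsAscendingChain (R t) s ∧ m < s.card := by
  classical
  by_contra! hshort
  have hheight : ∀ t x, chainHeight (R t) x - 1 < m := fun t x => by
    obtain ⟨s, hs, -, -, hcard⟩ := exists_card_eq_chainHeight (R t) x
    have := one_le_chainHeight (R t) x
    have := hshort t s hs
    omega
  let label : α → ι → Fin m := fun x t => ⟨chainHeight (R t) x - 1, hheight t x⟩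
  have label_ne : ∀ x y, x < y → label x ≠ label y := fun x y hxy heq => by
    obtain ⟨t, hRt⟩ := hcov x y hxy
    have hlt := chainHeight_lt_chainHeight (hR t) hxy hRt
    have := one_le_chainHeight (R t) x
    have := congrArg Fin.val (congrFun heq t)
    simp only [label] at this
    omega
  obtain ⟨x, y, hne, heq⟩ := Fintype.exists_ne_map_eq_of_card_lt label (by simpa using hm)
  rcases hne.lt_or_gt with hxy | hyx
  · exact label_ne x y hxy heq
  · exact label_ne y x hyx heq.symm

theorem exists_strictMono_of_pow_lt (R : ι → α → α → Prop) (hR : ∀ t, IsTrans α (R t))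
    (hcov : ∀ x y, x < y → ∃ t, R t x y) {d : ℕ}
    (hd : (d - 1) ^ Fintype.card ι < Fintype.card α) :
    ∃ t, ∃ c : Fin d → α, StrictMono c ∧ ∀ i j, i < j → R t (c i) (c j) := by
  obtain ⟨t, s, hs, hcard⟩ := exists_isAscendingChain_of_pow_lt R hR hcov hd
  obtain ⟨s', hs's, hs'card⟩ := Finset.exists_subset_card_eq (show d ≤ s.card by omega)
  refine ⟨t, s'.orderEmbOfFin hs'card, (s'.orderEmbOfFin hs'card).strictMono, fun i j hij => ?_⟩
  exact hs.mono hs's _ (s'.orderEmbOfFin_mem hs'card i) _ (s'.orderEmbOfFin_mem hs'card j)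
    ((s'.orderEmbOfFin hs'card).strictMono hij)

end Chains

section Arrays

variable {ρ γ β : Type*} [LinearOrder β]

def columnColoring (A : ρ → γ → β) (k l : ℕ) :
    {S : Finset ρ // S.card = k} ⊕ {S : Finset ρ // S.card = l} → γ → γ → Prop
  | .inl S => fun x y => ∀ i ∈ S.1, A i x ≤ A i y
  | .inr S => fun x y => ∀ i ∈ S.1, A i y ≤ A i x

lemma isTrans_columnColoring (A : ρ → γ → β) (k l : ℕ) :
    ∀ t, IsTrans γ (columnColoring A k l t)
  | .inl _ => ⟨fun _ _ _ hxy hyz i hi => (hxy i hi).trans (hyz i hi)⟩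
  | .inr _ => ⟨fun _ _ _ hxy hyz i hi => (hyz i hi).trans (hxy i hi)⟩

lemma columnColoring_self (A : ρ → γ → β) (k l : ℕ) :
    ∀ t x, columnColoring A k l t x x
  | .inl _, _ => fun _ _ => le_rfl
  | .inr _, _ => fun _ _ => le_rfl

lemma exists_columnColoring [Fintype ρ] (A : ρ → γ → β) {k l : ℕ}
    (hkl : k + l ≤ Fintype.card ρ + 1) (x y : γ) : ∃ t, columnColoring A k l t x y := by
  classical
  let up := Finset.univ.filter fun i => A i x ≤ A i y
  by_cases hup : k ≤ up.card
  · obtain ⟨S, hS, hScard⟩ := Finset.exists_subset_card_eq hup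
    exact ⟨.inl ⟨S, hScard⟩, fun i hi => (Finset.mem_filter.mp (hS hi)).2⟩
  · have hdown : l ≤ upᶜ.card := by rw [Finset.card_compl]; omega
    obtain ⟨S, hS, hScard⟩ := Finset.exists_subset_card_eq hdown
    refine ⟨.inr ⟨S, hScard⟩, fun i hi => ?_⟩
    have := Finset.mem_compl.mp (hS hi)
    simp only [up, Finset.mem_filter, Finset.mem_univ, true_and, not_le] at this
    exact this.le

end Arrays

lemma choose_add_choose_pred {k : ℕ} (hk : 1 ≤ k) (l : ℕ) :
    (k + l - 1).choose k + (k + l - 1).choose l = (k + l).choose k := by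
  obtain ⟨k, rfl⟩ : ∃ k', k = k' + 1 := ⟨k - 1, by omega⟩
  rw [show k + 1 + l - 1 = k + l by omega, show k + 1 + l = k + l + 1 by omega,
    Nat.choose_succ_succ', ← Nat.choose_symm_add, add_comm]

theorem property_kld_general (k l d : ℕ) (hk : 1 ≤ k)
    (A : Fin (k + l - 1) → Fin ((d - 1) ^ ((k + l).choose k) + 1) → ℝ) :
    (∃ r : Fin k → Fin (k + l - 1),
      ∃ c : Fin d → Fin ((d - 1) ^ ((k + l).choose k) + 1),
        StrictMono r ∧ StrictMono c ∧
        ∀ j j' : Fin d, j ≤ j' → ∀ i : Fin k, A (r i) (c j) ≤ A (r i) (c j')) ∨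
    (∃ r : Fin l → Fin (k + l - 1),
      ∃ c : Fin d → Fin ((d - 1) ^ ((k + l).choose k) + 1),
        StrictMono r ∧ StrictMono c ∧
        ∀ j j' : Fin d, j ≤ j' → ∀ i : Fin l, A (r i) (c j') ≤ A (r i) (c j)) := by
  have hcolors : Fintype.card ({S : Finset (Fin (k + l - 1)) // S.card = k} ⊕
      {S : Finset (Fin (k + l - 1)) // S.card = l}) = (k + l).choose k := by
    simp only [Fintype.card_sum, Fintype.card_finset_len, Fintype.card_fin,
      choose_add_choose_pred hk]
  obtain ⟨t, c, hc, hchain⟩ := exists_strictMono_of_pow_lt (columnColoring A k l)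
    (isTrans_columnColoring A k l)
    (fun x y _ => exists_columnColoring A (by simp only [Fintype.card_fin]; omega) x y)
    (d := d) (by rw [hcolors, Fintype.card_fin]; omega)
  have hchain_le : ∀ j j', j ≤ j' → columnColoring A k l t (c j) (c j') := fun j j' hjj' =>
    hjj'.lt_or_eq.elim (hchain j j') fun h => h ▸ columnColoring_self A k l t (c j)
  rcases t with ⟨S, hS⟩ | ⟨S, hS⟩
  · exact .inl ⟨S.orderEmbOfFin hS, c, (S.orderEmbOfFin hS).strictMono, hc,
      fun j j' hjj' i => hchain_le j j' hjj' _ (S.orderEmbOfFin_mem hS i)⟩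
  · exact .inr ⟨S.orderEmbOfFin hS, c, (S.orderEmbOfFin hS).strictMono, hc,
      fun j j' hjj' i => hchain_le j j' hjj' _ (S.orderEmbOfFin_mem hS i)⟩

/-- Theorem 3: every real array of size (k+l-1) × ((d-1)^C(k+l,k) + 1) has
property (k, l, d): it contains a k × d subarray whose columns form an
increasing sequence of vectors in ℝ^k, or an l × d subarray whose columns
form a decreasing sequence of vectors in ℝ^l. -/
theorem property_kld (k l d : ℕ) (hk : 1 ≤ k) (hl : 1 ≤ l) (hd : 2 ≤ d)
    (A : Fin (k + l - 1) → Fin ((d - 1) ^ ((k + l).choose k) + 1) → ℝ) :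
    (∃ r : Fin k → Fin (k + l - 1),
      ∃ c : Fin d → Fin ((d - 1) ^ ((k + l).choose k) + 1),
        StrictMono r ∧ StrictMono c ∧
        ∀ j j' : Fin d, j ≤ j' → ∀ i : Fin k, A (r i) (c j) ≤ A (r i) (c j')) ∨
    (∃ r : Fin l → Fin (k + l - 1),
      ∃ c : Fin d → Fin ((d - 1) ^ ((k + l).choose k) + 1),
        StrictMono r ∧ StrictMono c ∧
        ∀ j j' : Fin d, j ≤ j' → ∀ i : Fin l, A (r i) (c j') ≤ A (r i) (c j)) :=
  property_kld_general k l d hk A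
end

section
/- For every k, l ≥ 1 and M ≥ 2, there exists a real-valued array of size (k+l-2) × M that contains neither a k × d subarray whose columns form an increasing sequence of vectors in R^k nor an l × d subarray whose columns form a decreasing sequence of vectors in R^l, for any d ≥ 2. Concretely, the array whose first k-1 rows are (1, 2, ..., M) and whose remaining l-1 rows are (M, M-1, ..., 1) has this property. -/
/-- Remark 4: the (k+l-2) × M array whose first k-1 rows are (1,…,M) and whose
remaining l-1 rows are (M,…,1) has, for every d ≥ 2, no k × d subarray with
increasing columns (in ℝ^k) and no l × d subarray with decreasing columns. -/
theorem lower_bound_rows (k l M : ℕ) (hk : 1 ≤ k) (hl : 1 ≤ l) (hM : 2 ≤ M) :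
    ∃ A : Fin (k + l - 2) → Fin M → ℝ,
      (A = fun (i : Fin (k + l - 2)) (j : Fin M) => if (i : ℕ) < k - 1 then ((j : ℕ) + 1 : ℝ) else (M - (j : ℕ) : ℝ)) ∧
      ∀ d : ℕ, 2 ≤ d →
        (¬ ∃ r : Fin k → Fin (k + l - 2), ∃ c : Fin d → Fin M,
            StrictMono r ∧ StrictMono c ∧
            ∀ j j' : Fin d, j ≤ j' → ∀ i : Fin k, A (r i) (c j) ≤ A (r i) (c j')) ∧
        (¬ ∃ r : Fin l → Fin (k + l - 2), ∃ c : Fin d → Fin M,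
            StrictMono r ∧ StrictMono c ∧
            ∀ j j' : Fin d, j ≤ j' → ∀ i : Fin l, A (r i) (c j') ≤ A (r i) (c j)) := by
  refine ⟨_, rfl, ?_⟩
  intro d hd
  constructor
  · rintro ⟨r, c, hr, hc, hmono⟩
    by_cases hall : ∀ i, (r i : ℕ) < k - 1
    · have hcard : Fintype.card (Fin k) ≤ Fintype.card (Fin (k - 1)) :=
        Fintype.card_le_of_injective (fun i => ⟨(r i : ℕ), hall i⟩)
          (fun a b hab => hr.injective (Fin.ext (by simpa using congrArg Fin.val hab)))
      simp only [Fintype.card_fin] at hcard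
      omega
    · push_neg at hall
      obtain ⟨i, hi⟩ := hall
      have h01 : (⟨0, by omega⟩ : Fin d) ≤ ⟨1, by omega⟩ := by
        simp [Fin.le_def]
      have hmle := hmono ⟨0, by omega⟩ ⟨1, by omega⟩ h01 i
      have hclt : (c ⟨0, by omega⟩ : ℕ) < (c ⟨1, by omega⟩ : ℕ) :=
        hc (by simp [Fin.lt_def])
      simp only [if_neg (not_lt.2 hi)] at hmle
      have hcast : ((c ⟨0, by omega⟩ : ℕ) : ℝ) < ((c ⟨1, by omega⟩ : ℕ) : ℝ) := by
        exact_mod_cast hclt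
      linarith
  · rintro ⟨r, c, hr, hc, hmono⟩
    by_cases hall : ∀ i, k - 1 ≤ (r i : ℕ)
    · have hcard : Fintype.card (Fin l) ≤ Fintype.card (Fin (l - 1)) :=
        Fintype.card_le_of_injective
          (fun i => ⟨(r i : ℕ) - (k - 1), by
            have := (r i).isLt
            have := hall i
            omega⟩)
          (fun a b hab => by
            have hab' : (r a : ℕ) - (k - 1) = (r b : ℕ) - (k - 1) := by
              simpa using congrArg Fin.val hab
            have ha := hall a
            have hb := hall b
            exact hr.injective (Fin.ext (by omega)))
      simp only [Fintype.card_fin] at hcard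
      omega
    · push_neg at hall
      obtain ⟨i, hi⟩ := hall
      have h01 : (⟨0, by omega⟩ : Fin d) ≤ ⟨1, by omega⟩ := by
        simp [Fin.le_def]
      have hmle := hmono ⟨0, by omega⟩ ⟨1, by omega⟩ h01 i
      have hclt : (c ⟨0, by omega⟩ : ℕ) < (c ⟨1, by omega⟩ : ℕ) :=
        hc (by simp [Fin.lt_def])
      simp only [if_pos hi] at hmle
      have hcast : ((c ⟨0, by omega⟩ : ℕ) : ℝ) < ((c ⟨1, by omega⟩ : ℕ) : ℝ) := by
        exact_mod_cast hclt
      linarith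
end

section
/- For every k, l ≥ 1 and d ≥ 2, there exists a real-valued array of size (k+l) × (d-1)^C(k+l,k) that contains neither a k × d subarray whose columns form an increasing sequence of vectors in R^k, nor an l × d subarray whose columns form a decreasing sequence of vectors in R^l. -/
/-- digit of `c` in base `D` at position `t`. -/
def dig (D t c : ℕ) : ℕ := c / D ^ t % D

lemma dig_lt {D : ℕ} (hD : 0 < D) (t c : ℕ) : dig D t c < D := Nat.mod_lt _ hD

lemma dig_succ (D t c : ℕ) : dig D (t + 1) c = dig D t (c / D) := by
  simp only [dig, pow_succ', Nat.div_div_eq_div_mul]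

/-- the most significant differing digit of `c < c'` is smaller in `c`. -/
lemma exists_lex {D : ℕ} (hD : 2 ≤ D) : ∀ c' c : ℕ, c < c' →
    ∃ p, dig D p c < dig D p c' ∧ ∀ q, p < q → dig D q c = dig D q c' := by
  intro c'
  induction c' using Nat.strong_induction_on with
  | _ c' ih =>
    intro c hcc
    by_cases hq : c / D = c' / D
    · refine ⟨0, ?_, ?_⟩
      · have h1 := Nat.div_add_mod c D
        have h2 := Nat.div_add_mod c' D
        rw [hq] at h1
        simp only [dig, pow_zero, Nat.div_one]
        set y := D * (c' / D) with hy
        omega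
      · intro q hq0
        obtain ⟨q', rfl⟩ := Nat.exists_eq_succ_of_ne_zero (Nat.pos_iff_ne_zero.mp hq0)
        rw [dig_succ, dig_succ, hq]
    · have hle : c / D ≤ c' / D := Nat.div_le_div_right (le_of_lt hcc)
      have hlt : c / D < c' / D := lt_of_le_of_ne hle hq
      have hpos : 0 < c' := by omega
      have hlt2 : c' / D < c' := Nat.div_lt_self hpos (by omega)
      obtain ⟨p, h1, h2⟩ := ih (c' / D) hlt2 (c / D) hlt
      refine ⟨p + 1, ?_, ?_⟩
      · rw [dig_succ, dig_succ]; exact h1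
      · intro q hq1
        obtain ⟨q', rfl⟩ := Nat.exists_eq_succ_of_ne_zero (by omega : q ≠ 0)
        rw [dig_succ, dig_succ]
        exact h2 q' (by omega)

lemma no_long_chain {d N : ℕ} (hd : 2 ≤ d) (c : Fin d → Fin N) (D ρ : ℕ) (hD : D + 1 = d)
    (hstep : ∀ jn (h : jn + 1 < d),
      dig D ρ (c ⟨jn, by omega⟩).val < dig D ρ (c ⟨jn + 1, h⟩).val) : False := by
  set F : ℕ → ℕ := fun j => if h : j < d then dig D ρ (c ⟨j, h⟩).val else 0 with hF
  have hstepF : ∀ j, j + 1 < d → F j < F (j + 1) := by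
    intro j h
    have e1 : F j = dig D ρ (c ⟨j, by omega⟩).val := dif_pos (by omega)
    have e2 : F (j + 1) = dig D ρ (c ⟨j + 1, h⟩).val := dif_pos h
    rw [e1, e2]; exact hstep j h
  have hmon : ∀ j, j < d → j ≤ F j := by
    intro j
    induction j with
    | zero => intro _; exact Nat.zero_le _
    | succ j ihj =>
      intro h
      have h1 := ihj (by omega)
      have h2 := hstepF j h
      omega
  have hFlt : ∀ j (h : j < d), F j < D := by
    intro j h
    have e1 : F j = dig D ρ (c ⟨j, h⟩).val := dif_pos h
    rw [e1]; exact dig_lt (by omega) _ _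
  have a := hmon (d - 1) (by omega)
  have b := hFlt (d - 1) (by omega)
  omega

lemma comp_lemma {D m : ℕ} (hD : 2 ≤ D) (P : ℕ → Prop) [DecidablePred P]
    {c c' p : ℕ} (hpm : p < m)
    (hlt : dig D p c < dig D p c') (heq : ∀ q, p < q → dig D q c = dig D q c') :
    (P p → (∑ t ∈ Finset.range m, (if P t then (1:ℝ) else -1) * (dig D t c : ℝ) * (D:ℝ)^t)
      < ∑ t ∈ Finset.range m, (if P t then (1:ℝ) else -1) * (dig D t c' : ℝ) * (D:ℝ)^t) ∧
    (¬ P p → (∑ t ∈ Finset.range m, (if P t then (1:ℝ) else -1) * (dig D t c' : ℝ) * (D:ℝ)^t)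
      < ∑ t ∈ Finset.range m, (if P t then (1:ℝ) else -1) * (dig D t c : ℝ) * (D:ℝ)^t) := by
  set g : ℕ → ℝ := fun t =>
    (if P t then (1:ℝ) else -1) * ((dig D t c' : ℝ) - (dig D t c : ℝ)) * (D:ℝ)^t with hg
  have hdiff : (∑ t ∈ Finset.range m, (if P t then (1:ℝ) else -1) * (dig D t c' : ℝ) * (D:ℝ)^t)
      - (∑ t ∈ Finset.range m, (if P t then (1:ℝ) else -1) * (dig D t c : ℝ) * (D:ℝ)^t)
      = ∑ t ∈ Finset.range m, g t := by
    rw [← Finset.sum_sub_distrib]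
    refine Finset.sum_congr rfl fun t _ => ?_
    simp only [hg]; ring
  have hsum : ∑ t ∈ Finset.range m, g t = g p + ∑ t ∈ (Finset.range m).erase p, g t :=
    (Finset.add_sum_erase _ g (Finset.mem_range.mpr hpm)).symm
  have hDpos : (0:ℝ) < (D:ℝ) := by exact_mod_cast (by omega : 0 < D)
  have habs : |∑ t ∈ (Finset.range m).erase p, g t| ≤ (D:ℝ)^p - 1 := by
    have step1 := Finset.abs_sum_le_sum_abs g ((Finset.range m).erase p)
    have step2 : ∑ t ∈ (Finset.range m).erase p, |g t|
        ≤ ∑ t ∈ (Finset.range m).erase p, (if t < p then ((D:ℝ)-1) * (D:ℝ)^t else 0) := by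
      refine Finset.sum_le_sum fun t ht => ?_
      by_cases htp : t < p
      · rw [if_pos htp]
        have b1 : (dig D t c : ℝ) + 1 ≤ (D:ℝ) := by exact_mod_cast dig_lt (by omega) t c
        have b2 : (dig D t c' : ℝ) + 1 ≤ (D:ℝ) := by exact_mod_cast dig_lt (by omega) t c'
        have n1 : (0:ℝ) ≤ (dig D t c : ℝ) := Nat.cast_nonneg _
        have n2 : (0:ℝ) ≤ (dig D t c' : ℝ) := Nat.cast_nonneg _
        have hone : |(if P t then (1:ℝ) else -1)| = 1 := by split <;> simp
        have hd2 : |(dig D t c' : ℝ) - (dig D t c : ℝ)| ≤ (D:ℝ) - 1 :=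
          abs_le.mpr ⟨by linarith, by linarith⟩
        have hpt : (0:ℝ) ≤ (D:ℝ)^t := by positivity
        calc |g t| = |(if P t then (1:ℝ) else -1)| * |(dig D t c' : ℝ) - (dig D t c : ℝ)|
              * |(D:ℝ)^t| := by simp only [hg]; rw [abs_mul, abs_mul]
          _ = |(dig D t c' : ℝ) - (dig D t c : ℝ)| * (D:ℝ)^t := by
              rw [hone, one_mul, abs_of_nonneg hpt]
          _ ≤ ((D:ℝ)-1) * (D:ℝ)^t := by
              exact mul_le_mul_of_nonneg_right hd2 hpt
      · rw [if_neg htp]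
        have hne : t ≠ p := (Finset.mem_erase.mp ht).1
        have hzero : g t = 0 := by
          rw [hg]; simp only [heq t (by omega)]; ring
        rw [hzero, abs_zero]
    have step3 : ∑ t ∈ (Finset.range m).erase p, (if t < p then ((D:ℝ)-1) * (D:ℝ)^t else 0)
        = ∑ t ∈ Finset.range p, ((D:ℝ)-1) * (D:ℝ)^t := by
      rw [← Finset.sum_subset (fun t ht => ?_) (fun t _ ht2 => ?_)]
      · exact Finset.sum_congr rfl fun t ht => if_pos (Finset.mem_range.mp ht)
      · have := Finset.mem_range.mp ht
        exact Finset.mem_erase.mpr ⟨by omega, Finset.mem_range.mpr (by omega)⟩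
      · rw [if_neg (fun h => ht2 (Finset.mem_range.mpr h))]
    have step4 : ∑ t ∈ Finset.range p, ((D:ℝ)-1) * (D:ℝ)^t = (D:ℝ)^p - 1 := by
      calc ∑ t ∈ Finset.range p, ((D:ℝ)-1) * (D:ℝ)^t
          = (∑ t ∈ Finset.range p, (D:ℝ)^t) * ((D:ℝ) - 1) := by
            rw [Finset.sum_mul]; exact Finset.sum_congr rfl fun t _ => mul_comm _ _
        _ = (D:ℝ)^p - 1 := geom_sum_mul _ _
    calc |∑ t ∈ (Finset.range m).erase p, g t| ≤ _ := step1
      _ ≤ _ := step2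
      _ = _ := step3.trans step4
  have hδ : (1:ℝ) ≤ (dig D p c' : ℝ) - (dig D p c : ℝ) := by
    have : (dig D p c : ℝ) + 1 ≤ (dig D p c' : ℝ) := by exact_mod_cast hlt
    linarith
  have hDp : (1:ℝ) ≤ (D:ℝ)^p := one_le_pow₀ (by exact_mod_cast (by omega : 1 ≤ D))
  have hDp0 : (0:ℝ) < (D:ℝ)^p := by positivity
  have habs1 := (abs_le.mp habs).1
  have habs2 := (abs_le.mp habs).2
  constructor
  · intro hP
    have hgp : g p = ((dig D p c' : ℝ) - (dig D p c : ℝ)) * (D:ℝ)^p := by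
      rw [hg]; simp [hP]
    have h1 : (D:ℝ)^p ≤ g p := by
      rw [hgp]; exact le_mul_of_one_le_left (le_of_lt hDp0) hδ
    linarith
  · intro hP
    have hgp : g p = -(((dig D p c' : ℝ) - (dig D p c : ℝ)) * (D:ℝ)^p) := by
      rw [hg]; simp [hP]; ring
    have h1 : g p ≤ -(D:ℝ)^p := by
      rw [hgp]
      have := le_mul_of_one_le_left (le_of_lt hDp0) hδ
      linarith
    linarith

/-- Theorem 5 (tightness): for every k, l ≥ 1 and d ≥ 2 there is a real array of
size (k+l) × (d-1)^C(k+l,k) with no k × d subarray whose columns increase in ℝ^k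
and no l × d subarray whose columns decrease in ℝ^l. -/
theorem tightness (k l d : ℕ) (hk : 1 ≤ k) (hl : 1 ≤ l) (hd : 2 ≤ d) :
    ∃ A : Fin (k + l) → Fin ((d - 1) ^ ((k + l).choose k)) → ℝ,
      (¬ ∃ r : Fin k → Fin (k + l), ∃ c : Fin d → Fin ((d - 1) ^ ((k + l).choose k)),
          StrictMono r ∧ StrictMono c ∧
          ∀ j j' : Fin d, j ≤ j' → ∀ i : Fin k, A (r i) (c j) ≤ A (r i) (c j')) ∧
      (¬ ∃ r : Fin l → Fin (k + l), ∃ c : Fin d → Fin ((d - 1) ^ ((k + l).choose k)),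
          StrictMono r ∧ StrictMono c ∧
          ∀ j j' : Fin d, j ≤ j' → ∀ i : Fin l, A (r i) (c j') ≤ A (r i) (c j)) := by
  rcases eq_or_lt_of_le hd with hd2 | hd3
  · -- d = 2 : only one column, no strictly monotone c : Fin d → Fin 1
    subst hd2
    refine ⟨fun _ _ => 0, ?_, ?_⟩ <;>
    · rintro ⟨r, c, hr, hc, -⟩
      have h0 := (c 0).isLt
      have h1 := (c 1).isLt
      norm_num at h0 h1
      have := hc (show (0 : Fin 2) < 1 by decide)
      rw [Fin.lt_def] at this
      omega
  · -- main construction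
    have hD2 : 2 ≤ d - 1 := by omega
    have hcard : Fintype.card {s : Finset (Fin (k+l)) // s.card = k} = (k+l).choose k := by
      simp [Fintype.card_finset_len]
    set E := Fintype.equivFinOfCardEq hcard with hE
    set eset : ℕ → Finset (Fin (k+l)) := fun t =>
      if h : t < (k+l).choose k then (E.symm ⟨t, h⟩ : {s : Finset (Fin (k+l)) // s.card = k}).1
      else ∅ with heset
    have ecard : ∀ t, t < (k+l).choose k → (eset t).card = k := by
      intro t h
      simp only [heset]
      rw [dif_pos h]
      exact (E.symm ⟨t, h⟩).2
    have einj : ∀ t t', t < (k+l).choose k → t' < (k+l).choose k → eset t = eset t' → t = t' := by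
      intro t t' h h' hee
      simp only [heset] at hee
      rw [dif_pos h, dif_pos h'] at hee
      have := E.symm.injective (Subtype.ext hee)
      exact congrArg Fin.val this
    have esurj : ∀ S : Finset (Fin (k+l)), S.card = k →
        ∃ ρ, ρ < (k+l).choose k ∧ eset ρ = S := by
      intro S hS
      refine ⟨(E ⟨S, hS⟩).val, (E ⟨S, hS⟩).isLt, ?_⟩
      simp only [heset]
      rw [dif_pos (E ⟨S, hS⟩).isLt]
      have : (⟨(E ⟨S, hS⟩).val, (E ⟨S, hS⟩).isLt⟩ : Fin ((k+l).choose k)) = E ⟨S, hS⟩ :=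
        Fin.eta _ _
      rw [this, Equiv.symm_apply_apply]
    refine ⟨fun i c => ∑ t ∈ Finset.range ((k+l).choose k),
      (if i ∈ eset t then (1:ℝ) else -1) * (dig (d-1) t c.val : ℝ) * ((d-1 : ℕ) : ℝ)^t, ?_, ?_⟩
    · rintro ⟨r, c, hr, hc, hmono⟩
      have hRcard : (Finset.image r Finset.univ).card = k := by
        rw [Finset.card_image_of_injective _ hr.injective]; simp
      obtain ⟨ρ, hρm, hρ⟩ := esurj _ hRcard
      refine no_long_chain hd c (d-1) ρ (by omega) ?_
      intro jn hj
      have hcc : (c ⟨jn, by omega⟩).val < (c ⟨jn+1, hj⟩).val :=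
        hc (Fin.mk_lt_mk.mpr (by omega))
      obtain ⟨p, hplt, hpeq⟩ := exists_lex hD2 _ _ hcc
      have hpm : p < (k+l).choose k := by
        by_contra hpm
        have b1 : (c ⟨jn, by omega⟩).val < (d-1)^p :=
          lt_of_lt_of_le (c _).isLt (Nat.pow_le_pow_right (by omega) (by omega))
        have b2 : (c ⟨jn+1, hj⟩).val < (d-1)^p :=
          lt_of_lt_of_le (c _).isLt (Nat.pow_le_pow_right (by omega) (by omega))
        simp [dig, Nat.div_eq_of_lt b1, Nat.div_eq_of_lt b2] at hplt
      have hsub : Finset.image r Finset.univ ⊆ eset p := by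
        intro i hi
        obtain ⟨i₀, -, rfl⟩ := Finset.mem_image.mp hi
        by_contra hip
        have h1 := hmono ⟨jn, by omega⟩ ⟨jn+1, hj⟩ (Fin.mk_le_mk.mpr (by omega)) i₀
        have h2 := (comp_lemma hD2 (fun t => r i₀ ∈ eset t) hpm hplt hpeq).2 hip
        exact absurd h1 (not_le.mpr h2)
      have heqset : eset p = Finset.image r Finset.univ :=
        (Finset.eq_of_subset_of_card_le hsub (by rw [ecard p hpm, hRcard])).symm
      have hpρ : p = ρ := einj p ρ hpm hρm (heqset.trans hρ.symm)
      rw [← hpρ]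
      exact hplt
    · rintro ⟨r, c, hr, hc, hmono⟩
      have hRcard : (Finset.image r Finset.univ).card = l := by
        rw [Finset.card_image_of_injective _ hr.injective]; simp
      have hCcard : (Finset.image r Finset.univ)ᶜ.card = k := by
        rw [Finset.card_compl, hRcard]
        simp
      obtain ⟨ρ, hρm, hρ⟩ := esurj _ hCcard
      refine no_long_chain hd c (d-1) ρ (by omega) ?_
      intro jn hj
      have hcc : (c ⟨jn, by omega⟩).val < (c ⟨jn+1, hj⟩).val :=
        hc (Fin.mk_lt_mk.mpr (by omega))
      obtain ⟨p, hplt, hpeq⟩ := exists_lex hD2 _ _ hcc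
      have hpm : p < (k+l).choose k := by
        by_contra hpm
        have b1 : (c ⟨jn, by omega⟩).val < (d-1)^p :=
          lt_of_lt_of_le (c _).isLt (Nat.pow_le_pow_right (by omega) (by omega))
        have b2 : (c ⟨jn+1, hj⟩).val < (d-1)^p :=
          lt_of_lt_of_le (c _).isLt (Nat.pow_le_pow_right (by omega) (by omega))
        simp [dig, Nat.div_eq_of_lt b1, Nat.div_eq_of_lt b2] at hplt
      have hsub : eset p ⊆ (Finset.image r Finset.univ)ᶜ := by
        intro i hi
        rw [Finset.mem_compl]
        intro hiR
        obtain ⟨i₀, -, hri⟩ := Finset.mem_image.mp hiR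
        subst hri
        have h1 := hmono ⟨jn, by omega⟩ ⟨jn+1, hj⟩ (Fin.mk_le_mk.mpr (by omega)) i₀
        have h2 := (comp_lemma hD2 (fun t => r i₀ ∈ eset t) hpm hplt hpeq).1 hi
        exact absurd h1 (not_le.mpr h2)
      have heqset : eset p = (Finset.image r Finset.univ)ᶜ :=
        Finset.eq_of_subset_of_card_le hsub (by rw [ecard p hpm, hCcard])
      have hpρ : p = ρ := einj p ρ hpm hρm (heqset.trans hρ.symm)
      rw [← hpρ]
      exact hplt
end

section
/- Let q = C(k+l,k) and d ≥ 2. Suppose c_1 < c_2 < ... < c_d are d distinct integers in [ (d-1)^q ], where for each i from 0 to q the interval [1, (d-1)^q] is partitioned into consecutive blocks of size (d-1)^i. Then there exist two distinct indices i_1, i_2 in [q] such that for each i ∈ {i_1, i_2}, some block of size (d-1)^i contains at least two distinct sub-blocks of size (d-1)^{i-1} each of which contains at least one of c_1, ..., c_d. -/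
/-- Claim 1 (pigeonhole claim): with q = C(k+l,k) and d ≥ 2, for any d distinct
positions c₁ < … < c_d in [(d-1)^q] (positions taken 0-indexed, the block of
size (d-1)^i containing a position p being determined by p / (d-1)^i), there
are two distinct scales i₁, i₂ ∈ [q] such that at each of these scales some
block of size (d-1)^i contains two distinct sub-blocks of size (d-1)^(i-1),
each containing one of the chosen positions. -/
theorem pigeonhole_claim (k l d : ℕ) (hk : 1 ≤ k) (hl : 1 ≤ l) (hd : 2 ≤ d)
    (q : ℕ) (hq : q = (k + l).choose k)
    (c : Fin d → Fin ((d - 1) ^ q)) (hc : StrictMono c) :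
    ∃ i₁ i₂ : ℕ, 1 ≤ i₁ ∧ i₁ ≤ q ∧ 1 ≤ i₂ ∧ i₂ ≤ q ∧ i₁ ≠ i₂ ∧
      (∀ i ∈ ({i₁, i₂} : Set ℕ), ∃ j j' : Fin d,
        (c j : ℕ) / (d - 1) ^ i = (c j' : ℕ) / (d - 1) ^ i ∧
        (c j : ℕ) / (d - 1) ^ (i - 1) ≠ (c j' : ℕ) / (d - 1) ^ (i - 1)) := by
  classical
  have he1 : 1 ≤ d - 1 := by omega
  set s : ℕ → Finset ℕ := fun i => Finset.image (fun j => (c j : ℕ) / (d - 1) ^ i)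
    Finset.univ with hs
  have hdd : ∀ (j : Fin d) (i : ℕ),
      (c j : ℕ) / (d - 1) ^ i / (d - 1) = (c j : ℕ) / (d - 1) ^ (i + 1) := by
    intro j i
    rw [Nat.div_div_eq_div_mul, ← pow_succ]
  have hstep : ∀ i, s (i + 1) = (s i).image (· / (d - 1)) := by
    intro i
    rw [hs]
    simp only [Finset.image_image]
    apply Finset.image_congr
    intro j _
    simp [Function.comp, hdd]
  have hmono : ∀ i, (s (i + 1)).card ≤ (s i).card := by
    intro i; rw [hstep]; exact Finset.card_image_le
  have hbound : ∀ i, (s i).card ≤ (d - 1) * (s (i + 1)).card := by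
    intro i
    rw [hstep i]
    apply Finset.card_le_mul_card_image
    intro a _
    calc ((s i).filter (fun x => x / (d - 1) = a)).card
        ≤ (Finset.Ico (a * (d - 1)) (a * (d - 1) + (d - 1))).card := by
          apply Finset.card_le_card
          intro x hx
          simp only [Finset.mem_filter] at hx
          obtain ⟨-, hxa⟩ := hx
          subst hxa
          have h2 : x % (d - 1) < d - 1 := Nat.mod_lt _ (by omega)
          have h1 : x / (d - 1) * (d - 1) + x % (d - 1) = x := Nat.div_add_mod' x (d - 1)
          simp only [Finset.mem_Ico]
          constructor
          · exact Nat.div_mul_le_self x (d - 1)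
          · calc x = x / (d - 1) * (d - 1) + x % (d - 1) := h1.symm
              _ < x / (d - 1) * (d - 1) + (d - 1) := Nat.add_lt_add_left h2 _
      _ = d - 1 := by simp
  have hinj0 : Function.Injective (fun j : Fin d => (c j : ℕ)) :=
    fun a b hab => hc.injective (Fin.val_injective hab)
  have h0 : (s 0).card = d := by
    rw [hs]
    simp only [pow_zero, Nat.div_one]
    rw [Finset.card_image_of_injective Finset.univ hinj0, Finset.card_univ,
      Fintype.card_fin]
  have hsq : (s q).card = 1 := by
    have hone : s q = {0} := by
      rw [hs]
      apply Finset.eq_singleton_iff_nonempty_unique_mem.mpr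
      constructor
      · exact ⟨(c ⟨0, by omega⟩ : ℕ) / (d - 1) ^ q,
          Finset.mem_image_of_mem _ (Finset.mem_univ _)⟩
      · intro x hx
        simp only [Finset.mem_image] at hx
        obtain ⟨j, -, rfl⟩ := hx
        exact Nat.div_eq_of_lt (c j).2
    rw [hone]; simp
  set P : ℕ → Prop := fun i => (s i).card < (s (i - 1)).card with hP
  set S : Finset ℕ := (Finset.Icc 1 q).filter P with hSdef
  have key : ∀ n, (s 0).card ≤ (d - 1) ^ ((Finset.Icc 1 n).filter P).card * (s n).card := by
    intro n
    induction n with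
    | zero => simp
    | succ n ih =>
      have hins : Finset.Icc 1 (n + 1) = insert (n + 1) (Finset.Icc 1 n) := by
        ext x; simp only [Finset.mem_Icc, Finset.mem_insert]; omega
      rw [hins, Finset.filter_insert]
      by_cases hp : P (n + 1)
      · rw [if_pos hp, Finset.card_insert_of_notMem
          (by simp only [Finset.mem_filter, Finset.mem_Icc]; omega)]
        calc (s 0).card ≤ (d - 1) ^ ((Finset.Icc 1 n).filter P).card * (s n).card := ih
          _ ≤ (d - 1) ^ ((Finset.Icc 1 n).filter P).card * ((d - 1) * (s (n+1)).card) :=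
              Nat.mul_le_mul_left _ (hbound n)
          _ = (d - 1) ^ (((Finset.Icc 1 n).filter P).card + 1) * (s (n+1)).card := by ring
      · rw [if_neg hp]
        have heq : (s n).card = (s (n + 1)).card := by
          have h1 := hmono n
          have h2 : ¬ (s (n + 1)).card < (s n).card := by
            simpa [hP] using hp
          omega
        rw [← heq]
        exact ih
  have hS2 : 2 ≤ S.card := by
    by_contra hcon
    push_neg at hcon
    have h1 := key q
    rw [hsq, h0, mul_one] at h1
    have h2 : (d - 1) ^ S.card ≤ d - 1 := by
      calc (d - 1) ^ S.card ≤ (d - 1) ^ 1 := Nat.pow_le_pow_right he1 (by omega)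
        _ = d - 1 := pow_one _
    have h3 : d ≤ d - 1 := le_trans h1 h2
    omega
  obtain ⟨i₁, hi₁, i₂, hi₂, hne⟩ := Finset.one_lt_card.mp (by omega : 1 < S.card)
  have main : ∀ i ∈ S, ∃ j j' : Fin d,
      (c j : ℕ) / (d - 1) ^ i = (c j' : ℕ) / (d - 1) ^ i ∧
      (c j : ℕ) / (d - 1) ^ (i - 1) ≠ (c j' : ℕ) / (d - 1) ^ (i - 1) := by
    intro i hi
    rw [hSdef, Finset.mem_filter, Finset.mem_Icc] at hi
    obtain ⟨⟨hi1, hiq⟩, hPi⟩ := hi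
    by_contra hcon
    push_neg at hcon
    have hi' : i - 1 + 1 = i := by omega
    have hinj : Set.InjOn (· / (d - 1)) (s (i - 1)) := by
      intro x hx y hy hxy
      rw [Finset.mem_coe, hs, Finset.mem_image] at hx hy
      obtain ⟨j, -, rfl⟩ := hx
      obtain ⟨j', -, rfl⟩ := hy
      simp only at hxy
      rw [hdd j (i - 1), hdd j' (i - 1), hi'] at hxy
      exact hcon j j' hxy
    have hcard : (s i).card = (s (i - 1)).card := by
      conv_lhs => rw [← hi', hstep]
      exact Finset.card_image_of_injOn hinj
    rw [hP] at hPi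
    omega
  have hm₁ := hi₁
  have hm₂ := hi₂
  rw [hSdef, Finset.mem_filter, Finset.mem_Icc] at hm₁ hm₂
  refine ⟨i₁, i₂, hm₁.1.1, hm₁.1.2, hm₂.1.1, hm₂.1.2, hne, ?_⟩
  intro i hi
  simp only [Set.mem_insert_iff, Set.mem_singleton_iff] at hi
  rcases hi with rfl | rfl
  · exact main _ hi₁
  · exact main _ hi₂
end

section
/- For every n ≥ 1, M_2(n) ≤ 2 · C((2n-2)^2 + 1, 2n-1) · (n-1)^C(2n,n) + 1, where M_2(n) is the least N such that every real N × N array contains a monotone n × n subarray. -/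
variable {R : ℕ → ℕ → Prop} [DecidableRel R]

def chainLen (R : ℕ → ℕ → Prop) [DecidableRel R] (v : ℕ) : ℕ :=
  (((Finset.range v).filter (fun u => R u v)).attach.sup
      fun u => chainLen R u.1) + 1
  termination_by v
  decreasing_by
    have := u.2
    simp only [Finset.mem_filter, Finset.mem_range] at this
    exact this.1

lemma chainLen_pos (v : ℕ) : 1 ≤ chainLen R v := by
  rw [chainLen]; omega

lemma chainLen_lt {u v : ℕ} (h : R u v) (huv : u < v) :
    chainLen R u < chainLen R v := by
  conv_rhs => rw [chainLen]
  have hu : u ∈ (Finset.range v).filter (fun u => R u v) := by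
    simp [huv, h]
  have h2 : chainLen R u ≤ ((Finset.range v).filter (fun u => R u v)).attach.sup
      (fun x => chainLen R x.1) :=
    Finset.le_sup (f := fun x : {x // x ∈ (Finset.range v).filter (fun u => R u v)} =>
      chainLen R x.1) (Finset.mem_attach _ ⟨u, hu⟩)
  omega

lemma chainLen_extract (htrans : Transitive R) :
    ∀ c v, c + 1 ≤ chainLen R v →
    ∃ F : Finset ℕ, F.card = c + 1 ∧ v ∈ F ∧ (∀ x ∈ F, x ≤ v) ∧
      ∀ x ∈ F, ∀ y ∈ F, x < y → R x y := by
  intro c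
  induction c with
  | zero =>
    intro v _
    refine ⟨{v}, by simp, by simp, by simp, ?_⟩
    intro x hx y hy hxy
    simp only [Finset.mem_singleton] at hx hy
    omega
  | succ c ih =>
    intro v hv
    rw [chainLen] at hv
    set s := ((Finset.range v).filter (fun u => R u v)).attach with hs
    have hsup : c + 1 ≤ s.sup (fun u => chainLen R u.1) := by omega
    have hne : s.Nonempty := by
      rcases s.eq_empty_or_nonempty with h | h
      · rw [h, Finset.sup_empty] at hsup; simp at hsup
      · exact h
    obtain ⟨u, hu, hueq⟩ := Finset.exists_mem_eq_sup s hne (fun u => chainLen R u.1)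
    have huv : u.1 < v ∧ R u.1 v := by
      have := u.2
      simpa only [Finset.mem_filter, Finset.mem_range] using this
    obtain ⟨F, hcard, hmem, hle, hpair⟩ := ih u.1 (by omega)
    have hvF : v ∉ F := fun h => absurd (hle v h) (by omega)
    refine ⟨insert v F, ?_, Finset.mem_insert_self _ _, ?_, ?_⟩
    · rw [Finset.card_insert_of_notMem hvF, hcard]
    · intro x hx
      rcases Finset.mem_insert.mp hx with rfl | hx
      · exact le_refl _
      · exact (hle x hx).trans (le_of_lt huv.1)
    · intro x hx y hy hxy
      rcases Finset.mem_insert.mp hy with rfl | hy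
      · rcases Finset.mem_insert.mp hx with rfl | hx
        · omega
        · rcases eq_or_lt_of_le (hle x hx) with h | h
          · exact h ▸ huv.2
          · exact htrans (hpair x hx u.1 hmem h) huv.2
      · rcases Finset.mem_insert.mp hx with hxv | hx
        · exact absurd hxy (by have h1 := hle y hy; have h2 := huv.1; omega)
        · exact hpair x hx y hy hxy

lemma multicolor {κ : Type} [Fintype κ] [Nonempty κ] {m n : ℕ} (hn : 1 ≤ n)
    (hm : (n - 1) ^ (Fintype.card κ) < m)
    (R : κ → ℕ → ℕ → Prop)
    (htrans : ∀ k, Transitive (R k))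
    (htot : ∀ a b : ℕ, a < b → b < m → ∃ k, R k a b) :
    ∃ k, ∃ F : Finset ℕ, F.card = n ∧ (∀ x ∈ F, x < m) ∧
      ∀ x ∈ F, ∀ y ∈ F, x < y → R k x y := by
  classical
  set R' : κ → ℕ → ℕ → Prop := fun k a b => a < b ∧ b < m ∧ R k a b with hR'
  have htrans' : ∀ k, Transitive (R' k) := fun k a b c h1 h2 =>
    ⟨h1.1.trans h2.1, h2.2.1, htrans k h1.2.2 h2.2.2⟩
  have hmpos : 0 < m := lt_of_le_of_lt (Nat.zero_le _) hm
  by_cases hex : ∃ v, v < m ∧ ∃ k, n ≤ chainLen (R' k) v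
  · obtain ⟨v, hvm, k, hk⟩ := hex
    obtain ⟨F, hcard, hmem, hle, hpair⟩ :=
      chainLen_extract (R := R' k) (htrans' k) (n - 1) v (by omega)
    exact ⟨k, F, by omega, fun x hx => lt_of_le_of_lt (hle x hx) hvm,
      fun x hx y hy hxy => (hpair x hx y hy hxy).2.2⟩
  · exfalso
    push_neg at hex
    have hn2 : 2 ≤ n := by
      by_contra h
      obtain k := Classical.arbitrary κ
      have h1 := chainLen_pos (R := R' k) 0
      have h2 := hex 0 hmpos k
      omega
    set ψ : Fin m → (κ → Fin (n - 1)) := fun v k =>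
      ⟨chainLen (R' k) v.1 - 1, by
        have h1 := chainLen_pos (R := R' k) v.1
        have h2 := hex v.1 v.2 k
        omega⟩ with hψ
    have hinj : Function.Injective ψ := by
      intro u v h
      by_contra hne
      rcases Ne.lt_or_gt (fun h' : u = v => hne h') with hlt | hlt
      · obtain ⟨k, hk⟩ := htot u.1 v.1 hlt v.2
        have hc := chainLen_lt (R := R' k) ⟨hlt, v.2, hk⟩ hlt
        have := congrFun h k
        have h1 := chainLen_pos (R := R' k) u.1
        simp only [hψ, Fin.mk.injEq] at this
        omega
      · obtain ⟨k, hk⟩ := htot v.1 u.1 hlt u.2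
        have hc := chainLen_lt (R := R' k) ⟨hlt, u.2, hk⟩ hlt
        have := congrFun h k
        have h1 := chainLen_pos (R := R' k) v.1
        simp only [hψ, Fin.mk.injEq] at this
        omega
    have := Fintype.card_le_of_injective ψ hinj
    rw [Fintype.card_fin, Fintype.card_fun, Fintype.card_fin] at this
    omega

lemma choose_mono_half {n : ℕ} : ∀ {r s : ℕ}, r ≤ s → s ≤ n / 2 → n.choose r ≤ n.choose s := by
  intro r s h hs
  induction s with
  | zero => simp [Nat.le_zero.mp h]
  | succ s ih =>
    rcases Nat.eq_or_lt_of_le h with rfl | h'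
    · exact le_refl _
    · exact (ih (by omega) (by omega)).trans (Nat.choose_le_succ_of_lt_half_left (by omega))

lemma le_two_mul_choose {m k : ℕ} (hk1 : 1 ≤ k) (hk2 : k ≤ m - 1) (hm : 1 ≤ m) :
    m ≤ 2 * m.choose k := by
  rcases le_or_gt k (m / 2) with h | h
  · have := choose_mono_half (n := m) hk1 h
    rw [Nat.choose_one_right] at this
    omega
  · have hsym : m.choose (m - k) = m.choose k := Nat.choose_symm (by omega)
    have := choose_mono_half (n := m) (r := 1) (s := m - k) (by omega) (by omega)
    rw [Nat.choose_one_right] at this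
    omega

lemma choose_two_mul_eq (n : ℕ) (hn : 1 ≤ n) :
    (2 * n).choose n = 2 * ((2 * n - 1).choose n) := by
  obtain ⟨k, rfl⟩ : ∃ k, n = k + 1 := ⟨n - 1, by omega⟩
  have h1 : 2 * (k + 1) = (2 * k + 1) + 1 := by ring
  have h3 : 2 * (k + 1) - 1 = 2 * k + 1 := by omega
  have h2 : (2 * k + 1).choose k = (2 * k + 1).choose (k + 1) := by
    rw [← Nat.choose_symm (by omega : k + 1 ≤ 2 * k + 1)]
    congr 1
    omega
  rw [h1]
  have h4 : 2 * k + 1 + 1 - 1 = 2 * k + 1 := by omega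
  rw [h4, Nat.choose_succ_succ', h2]
  ring

/-- M₂(n) ≤ 2·C((2n-2)²+1, 2n-1)·(n-1)^C(2n,n) + 1 : every real array of size
N × N with N = 2·C((2n-2)²+1, 2n-1)·(n-1)^C(2n,n) + 1 contains a monotone
n × n subarray (both the sequence of its rows and the sequence of its columns
are monotone for the componentwise order), hence the least such N, M₂(n),
is at most this bound. -/
theorem M2_bound (n : ℕ) (hn : 1 ≤ n)
    (N : ℕ) (hN : N = 2 * (((2 * n - 2) ^ 2 + 1).choose (2 * n - 1)) * (n - 1) ^ ((2 * n).choose n) + 1)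
    (A : Fin N → Fin N → ℝ) :
    ∃ r c : Fin n → Fin N, StrictMono r ∧ StrictMono c ∧
      ((∀ i i' : Fin n, i ≤ i' → ∀ j : Fin n, A (r i) (c j) ≤ A (r i') (c j)) ∨
       (∀ i i' : Fin n, i ≤ i' → ∀ j : Fin n, A (r i') (c j) ≤ A (r i) (c j))) ∧
      ((∀ j j' : Fin n, j ≤ j' → ∀ i : Fin n, A (r i) (c j) ≤ A (r i) (c j')) ∨
       (∀ j j' : Fin n, j ≤ j' → ∀ i : Fin n, A (r i) (c j') ≤ A (r i) (c j))) := by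
  classical
  set m := (2 * n - 2) ^ 2 + 1 with hm
  set K := 2 * n - 1 with hKdef
  set E := (2 * n).choose n with hEdef
  set P := (n - 1) ^ E with hPdef
  have hNpos : 0 < N := by omega
  have hmN : m ≤ N := by
    rcases eq_or_lt_of_le hn with h | h
    · have hn1 : n = 1 := h.symm
      subst hn1
      have hm1 : m = 1 := by norm_num [hm]
      omega
    · have hP1 : 1 ≤ P := Nat.one_le_pow _ _ (by omega)
      have hK1 : 1 ≤ K := by omega
      have hK2 : K ≤ m - 1 := by
        obtain ⟨a, ha⟩ : ∃ a, 2 * n - 2 = a + 2 := ⟨2 * n - 4, by omega⟩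
        have hasq : 2 * n ≤ (2 * n - 2) ^ 2 := by
          rw [ha]
          have h2n : 2 * n = a + 4 := by omega
          rw [h2n]
          nlinarith
        omega
      have hle := le_two_mul_choose (m := m) (k := K) hK1 hK2 (by omega)
      have h2 : 2 * m.choose K ≤ 2 * m.choose K * P := Nat.le_mul_of_pos_right _ (by omega)
      omega
  set A' : ℕ → ℕ → ℝ := fun i j => if h : i < N ∧ j < N then A ⟨i, h.1⟩ ⟨j, h.2⟩ else 0 with hA'
  have hA'eq : ∀ (x : Fin m) (y : Fin N), A' x.1 y.1 = A (Fin.castLE hmN x) y := by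
    intro x y
    have hx : (x.1 < N ∧ y.1 < N) := ⟨lt_of_lt_of_le x.isLt hmN, y.isLt⟩
    simp only [hA', dif_pos hx]
    rfl
  -- Step A : each column has a monotone row-subset of size K among the first m rows
  have stepA : ∀ j : Fin N, ∃ p : Bool × {s : Finset (Fin m) // s.card = K},
      ∀ a b : Fin m, a ∈ p.2.1 → b ∈ p.2.1 → a < b →
        (if p.1 then A' a.1 j.1 ≤ A' b.1 j.1 else A' b.1 j.1 ≤ A' a.1 j.1) := by
    intro j
    have hR : ∀ ε : Bool, Transitive (fun x y : ℕ =>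
        if ε then A' x j.1 ≤ A' y j.1 else A' y j.1 ≤ A' x j.1) := by
      intro ε a b c h1 h2
      cases ε
      · simp only [Bool.false_eq_true, if_false] at *
        exact le_trans h2 h1
      · simp only [if_true] at *
        exact le_trans h1 h2
    have := multicolor (κ := Bool) (m := m) (n := K) (by omega : 1 ≤ K)
      (by rw [Fintype.card_bool]
          have hK1 : K - 1 = 2 * n - 2 := by omega
          rw [hK1]
          omega)
      (fun ε x y => if ε then A' x j.1 ≤ A' y j.1 else A' y j.1 ≤ A' x j.1)
      hR
      (fun a b _ _ => by
        rcases le_total (A' a j.1) (A' b j.1) with h | h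
        · exact ⟨true, by simpa using h⟩
        · exact ⟨false, by simpa using h⟩)
    obtain ⟨ε, F, hcard, hFm, hpair⟩ := this
    refine ⟨(ε, ⟨F.attachFin hFm, by rw [Finset.card_attachFin]; exact hcard⟩), ?_⟩
    intro a b ha hb hab
    have ha' := (Finset.mem_attachFin hFm).mp ha
    have hb' := (Finset.mem_attachFin hFm).mp hb
    exact hpair a.1 ha' b.1 hb' hab
  set φ : Fin N → Bool × {s : Finset (Fin m) // s.card = K} :=
    fun j => (stepA j).choose with hφdef
  have hφ : ∀ j : Fin N, ∀ a b : Fin m, a ∈ (φ j).2.1 → b ∈ (φ j).2.1 → a < b →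
      (if (φ j).1 then A' a.1 j.1 ≤ A' b.1 j.1 else A' b.1 j.1 ≤ A' a.1 j.1) :=
    fun j => (stepA j).choose_spec
  have hcards : Fintype.card (Bool × {s : Finset (Fin m) // s.card = K}) * P <
      Fintype.card (Fin N) := by
    have hc : Fintype.card (Bool × {s : Finset (Fin m) // s.card = K}) = 2 * m.choose K := by
      rw [Fintype.card_prod, Fintype.card_bool, Fintype.card_finset_len, Fintype.card_fin]
    rw [hc, Fintype.card_fin, hN]
    exact Nat.lt_succ_self _
  obtain ⟨p₀, hp₀⟩ := Fintype.exists_lt_card_fiber_of_mul_lt_card φ hcards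
  obtain ⟨T, hTsub, hTcard⟩ := Finset.exists_subset_card_eq (show P + 1 ≤ _ from hp₀)
  set cols := T.orderEmbOfFin hTcard with hcolsdef
  have hcolsφ : ∀ a : Fin (P + 1), φ (cols a) = p₀ := by
    intro a
    have h1 := Finset.orderEmbOfFin_mem T hTcard a
    have h2 := hTsub h1
    exact (Finset.mem_filter.mp h2).2
  set g₀ := p₀.2.1.orderEmbOfFin p₀.2.2 with hg₀def
  set C' : ℕ → Fin N := fun a => if h : a < P + 1 then cols ⟨a, h⟩ else ⟨0, hNpos⟩ with hC'
  haveI hne2 : Nonempty {s : Finset (Fin K) // s.card = n} := by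
    obtain ⟨s, _, hs⟩ := Finset.exists_subset_card_eq
      (show n ≤ (Finset.univ : Finset (Fin K)).card by
        rw [Finset.card_univ, Fintype.card_fin]; omega)
    exact ⟨⟨s, hs⟩⟩
  have hcard2 : (n - 1) ^ Fintype.card (Bool × {s : Finset (Fin K) // s.card = n}) < P + 1 := by
    have hc : Fintype.card (Bool × {s : Finset (Fin K) // s.card = n}) = E := by
      rw [Fintype.card_prod, Fintype.card_bool, Fintype.card_finset_len, Fintype.card_fin,
        hEdef, hKdef]
      exact (choose_two_mul_eq n hn).symm
    rw [hc, ← hPdef]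
    exact Nat.lt_succ_self _
  have stepB := multicolor (κ := Bool × {s : Finset (Fin K) // s.card = n}) (m := P + 1)
    (n := n) hn hcard2
    (fun q a b => ∀ i ∈ q.2.1,
      if q.1 then A' (g₀ i).1 (C' a).1 ≤ A' (g₀ i).1 (C' b).1
      else A' (g₀ i).1 (C' b).1 ≤ A' (g₀ i).1 (C' a).1)
    (by
      intro q a b c h1 h2 i hi
      have x1 := h1 i hi
      have x2 := h2 i hi
      rcases q with ⟨ε, s⟩
      cases ε
      · simp only [Bool.false_eq_true, if_false] at *
        exact le_trans x2 x1
      · simp only [if_true] at *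
        exact le_trans x1 x2)
    (by
      intro a b hab hbM
      set S := Finset.univ.filter
        (fun i : Fin K => A' (g₀ i).1 (C' a).1 ≤ A' (g₀ i).1 (C' b).1) with hS
      by_cases hSc : n ≤ S.card
      · obtain ⟨s, hssub, hscard⟩ := Finset.exists_subset_card_eq hSc
        refine ⟨(true, ⟨s, hscard⟩), ?_⟩
        intro i hi
        simp only [if_true]
        exact (Finset.mem_filter.mp (hssub hi)).2
      · have hcompl : n ≤ Sᶜ.card := by
          rw [Finset.card_compl, Fintype.card_fin]
          omega
        obtain ⟨s, hssub, hscard⟩ := Finset.exists_subset_card_eq hcompl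
        refine ⟨(false, ⟨s, hscard⟩), ?_⟩
        intro i hi
        simp only [Bool.false_eq_true, if_false]
        have hmem := hssub hi
        rw [Finset.mem_compl, hS, Finset.mem_filter] at hmem
        exact le_of_not_ge (fun hcon => hmem ⟨Finset.mem_univ _, hcon⟩))
  obtain ⟨q₀, G, hGcard, hGm, hGpair⟩ := stepB
  set h₀ := q₀.2.1.orderEmbOfFin q₀.2.2 with hh₀def
  set qc := G.orderEmbOfFin hGcard with hqcdef
  have hqcM : ∀ a : Fin n, qc a < P + 1 := fun a => hGm _ (Finset.orderEmbOfFin_mem G hGcard a)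
  refine ⟨fun i => Fin.castLE hmN (g₀ (h₀ i)), fun a => cols ⟨qc a, hqcM a⟩, ?_, ?_, ?_, ?_⟩
  · intro x y h
    exact Fin.strictMono_castLE hmN (g₀.strictMono (h₀.strictMono h))
  · intro x y h
    exact cols.strictMono (by simpa [Fin.mk_lt_mk] using qc.strictMono h)
  · -- row monotonicity
    have key : ∀ i i' : Fin n, i < i' → ∀ j : Fin n,
        (if p₀.1 then A (Fin.castLE hmN (g₀ (h₀ i))) (cols ⟨qc j, hqcM j⟩) ≤
            A (Fin.castLE hmN (g₀ (h₀ i'))) (cols ⟨qc j, hqcM j⟩)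
         else A (Fin.castLE hmN (g₀ (h₀ i'))) (cols ⟨qc j, hqcM j⟩) ≤
            A (Fin.castLE hmN (g₀ (h₀ i))) (cols ⟨qc j, hqcM j⟩)) := by
      intro i i' hii j
      have hmem : ∀ x : Fin n, g₀ (h₀ x) ∈ p₀.2.1 := fun x =>
        Finset.orderEmbOfFin_mem _ _ _
      have h1 := hφ (cols ⟨qc j, hqcM j⟩) (g₀ (h₀ i)) (g₀ (h₀ i'))
        (by rw [hcolsφ]; exact hmem i)
        (by rw [hcolsφ]; exact hmem i')
        (g₀.strictMono (h₀.strictMono hii))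
      rw [hcolsφ] at h1
      simp only [hA'eq] at h1
      exact h1
    cases hp : p₀.1
    · right
      intro i i' hii' j
      rcases eq_or_lt_of_le hii' with rfl | h
      · exact le_refl _
      · have := key i i' h j
        rw [hp] at this
        simpa using this
    · left
      intro i i' hii' j
      rcases eq_or_lt_of_le hii' with rfl | h
      · exact le_refl _
      · have := key i i' h j
        rw [hp] at this
        simpa using this
  · -- column monotonicity
    have key2 : ∀ j j' : Fin n, j < j' → ∀ i : Fin n,
        (if q₀.1 then A (Fin.castLE hmN (g₀ (h₀ i))) (cols ⟨qc j, hqcM j⟩) ≤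
            A (Fin.castLE hmN (g₀ (h₀ i))) (cols ⟨qc j', hqcM j'⟩)
         else A (Fin.castLE hmN (g₀ (h₀ i))) (cols ⟨qc j', hqcM j'⟩) ≤
            A (Fin.castLE hmN (g₀ (h₀ i))) (cols ⟨qc j, hqcM j⟩)) := by
      intro j j' hjj i
      have h1 := hGpair (qc j) (Finset.orderEmbOfFin_mem G hGcard j)
        (qc j') (Finset.orderEmbOfFin_mem G hGcard j')
        (qc.strictMono hjj) (h₀ i) (Finset.orderEmbOfFin_mem _ _ _)
      have hCj : ∀ a : Fin n, C' (qc a) = cols ⟨qc a, hqcM a⟩ := by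
        intro a
        rw [hC']
        simp only [hqcM a, dif_pos]
      rw [hCj j, hCj j'] at h1
      simp only [hA'eq] at h1
      exact h1
    cases hq : q₀.1
    · right
      intro j j' hjj' i
      rcases eq_or_lt_of_le hjj' with rfl | h
      · exact le_refl _
      · have := key2 j j' h i
        rw [hq] at this
        simpa using this
    · left
      intro j j' hjj' i
      rcases eq_or_lt_of_le hjj' with rfl | h
      · exact le_refl _
      · have := key2 j j' h i
        rw [hq] at this
        simpa using this
end

section
/- For every k, l, t ≥ 1 and d ≥ 2, if there exists a family of N binary vectors of length k+l+t such that no two distinct vectors share k common positions of ones and no two share l common positions of zeros, then there exists a real array of size (k+l+t) × (d-1)^N containing neither a k × d subarray whose columns form an increasing sequence of vectors in R^k nor an l × d subarray whose columns form a decreasing sequence of vectors in R^l. -/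
/-!
Let `b = d - 1` and write a column index `x < b ^ N` in base `b`. The entry in row `ρ`, column `x`
is the number obtained from `x` by replacing its digit `a` at position `s` by `b - 1 - a` whenever
the `s`-th vector of the family has a `0` at `ρ`; this is the paper's nested-block construction. If `x < y` and `s` is the most
significant digit where they differ, then the entry of row `ρ` increases from `x` to `y` exactly
when the `s`-th vector has a `1` at `ρ`. Among `d = b + 1` increasing columns the digit at a fixed
position cannot increase at every step, so two distinct positions `s ≠ s'` arise as such top
digits; in a `k × d` subarray with increasing columns both the `s`-th and `s'`-th vectors then have
ones in all `k` rows. Complementing every bit reverses each row, so decreasing subarrays give two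
vectors with `l` common zeros in the same way.
-/

open Finset

theorem Nat.div_pow_eq_mul_div_pow_succ_add_mod (z b i : ℕ) :
    z / b ^ i = b * (z / b ^ (i + 1)) + z / b ^ i % b := by
  rw [pow_succ, ← Nat.div_div_eq_div_mul, Nat.div_add_mod]

theorem Nat.div_pow_eq_of_forall_digit_eq {b n j x y : ℕ} (hj : j ≤ n)
    (hn : x / b ^ n = y / b ^ n) (h : ∀ i, j ≤ i → i < n → x / b ^ i % b = y / b ^ i % b) :
    x / b ^ j = y / b ^ j := by
  induction hj using Nat.decreasingInduction with
  | self => exact hn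
  | of_succ i hi ih =>
    rw [Nat.div_pow_eq_mul_div_pow_succ_add_mod x, Nat.div_pow_eq_mul_div_pow_succ_add_mod y,
      ih fun i' hi' => h i' (by omega), h i le_rfl hi]

section Digits

variable {b N : ℕ}

theorem finFunctionFinEquiv_lt_of_lex {f g : Fin N → Fin b} (h : Pi.Lex (· > ·) (· < ·) f g) :
    finFunctionFinEquiv f < finFunctionFinEquiv g := by
  obtain ⟨s, hagree, hlt⟩ := h
  have hdigit (f : Fin N → Fin b) (i : Fin N) :
      (finFunctionFinEquiv f : ℕ) / b ^ (i : ℕ) % b = f i := by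
    rw [← finFunctionFinEquiv_symm_apply_val, Equiv.symm_apply_apply]
  have hhigh : (finFunctionFinEquiv f : ℕ) / b ^ (s + 1 : ℕ) =
      (finFunctionFinEquiv g : ℕ) / b ^ (s + 1 : ℕ) := by
    refine Nat.div_pow_eq_of_forall_digit_eq s.isLt ?_ fun i hsi hiN => ?_
    · rw [Nat.div_eq_of_lt (finFunctionFinEquiv f).isLt, Nat.div_eq_of_lt (finFunctionFinEquiv g).isLt]
    · rw [hdigit f ⟨i, hiN⟩, hdigit g ⟨i, hiN⟩, hagree ⟨i, hiN⟩ (Fin.mk_lt_mk.2 hsi)]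
  refine Nat.lt_of_div_lt_div (c := b ^ (s : ℕ)) ?_
  rw [Nat.div_pow_eq_mul_div_pow_succ_add_mod (finFunctionFinEquiv f) b s,
    Nat.div_pow_eq_mul_div_pow_succ_add_mod (finFunctionFinEquiv g) b s, hhigh, hdigit, hdigit]
  exact Nat.add_lt_add_left hlt _

theorem lex_finFunctionFinEquiv_symm_of_lt {x y : Fin (b ^ N)} (hxy : x < y) :
    Pi.Lex (· > ·) (· < ·) (finFunctionFinEquiv.symm x) (finFunctionFinEquiv.symm y) := by
  by_contra hnot
  have hnot' : ¬ Pi.Lex (· > ·) (· < ·) (finFunctionFinEquiv.symm y) (finFunctionFinEquiv.symm x) :=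
    fun h => hxy.asymm (by simpa using finFunctionFinEquiv_lt_of_lex h)
  exact hxy.ne (finFunctionFinEquiv.symm.injective
    ((Pi.trichotomous_lex _ _ wellFounded_gt).trichotomous _ _ hnot hnot'))

theorem finFunctionFinEquiv_rev_symm [NeZero b] (x : Fin (b ^ N)) :
    finFunctionFinEquiv (fun i => (finFunctionFinEquiv.symm x i).rev) = x.rev := by
  have hsum : ∑ i : Fin N, (b - 1) * b ^ (i : ℕ) + 1 = b ^ N := by
    have hb : b - 1 + 1 = b := Nat.sub_add_cancel NeZero.one_le
    rw [Fin.sum_univ_eq_sum_range (fun i => (b - 1) * b ^ i), ← mul_sum, mul_comm]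
    simpa [hb] using geom_sum_mul_add (b - 1) N
  have hx : (x : ℕ) = ∑ i, (finFunctionFinEquiv.symm x i : ℕ) * b ^ (i : ℕ) := by
    rw [← finFunctionFinEquiv_apply, Equiv.apply_symm_apply]
  have hcompl : (finFunctionFinEquiv (fun i => (finFunctionFinEquiv.symm x i).rev) : ℕ) + x + 1 =
      b ^ N := by
    rw [finFunctionFinEquiv_apply, hx, ← sum_add_distrib]
    refine Eq.trans ?_ hsum
    congr 1
    refine sum_congr rfl fun i _ => ?_
    rw [← add_mul, Fin.val_rev]
    have := (finFunctionFinEquiv.symm x i).isLt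
    congr 1
    omega
  ext
  rw [Fin.val_rev]
  omega

def flipDigits (e : Fin N → Bool) (x : Fin (b ^ N)) : Fin (b ^ N) :=
  finFunctionFinEquiv fun s =>
    if e s then finFunctionFinEquiv.symm x s else (finFunctionFinEquiv.symm x s).rev

theorem flipDigits_not [NeZero b] (e : Fin N → Bool) (x : Fin (b ^ N)) :
    flipDigits (fun s => !e s) x = (flipDigits e x).rev := by
  rw [flipDigits, flipDigits, ← finFunctionFinEquiv_rev_symm, Equiv.symm_apply_apply]
  congr 1
  ext s
  cases e s <;> simp

theorem exists_digit_lt_and_flipDigits_lt {x y : Fin (b ^ N)} (hxy : x < y) :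
    ∃ s, finFunctionFinEquiv.symm x s < finFunctionFinEquiv.symm y s ∧
      ∀ e : Fin N → Bool, e s = false → flipDigits e y < flipDigits e x := by
  obtain ⟨s, hagree, hlt⟩ := lex_finFunctionFinEquiv_symm_of_lt hxy
  refine ⟨s, hlt, fun e he => finFunctionFinEquiv_lt_of_lex ⟨s, fun i hi => ?_, ?_⟩⟩
  · simp [hagree i hi]
  · simpa [he] using hlt

end Digits

theorem Fin.exists_ne_of_forall_exists_lt {α : Type*} {d b : ℕ} (hd : 1 < d) (hbd : b < d)
    (P : α → Prop) (a : Fin d → α → Fin b) (h : ∀ j j', j < j' → ∃ s, P s ∧ a j s < a j' s) :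
    ∃ s s', s ≠ s' ∧ P s ∧ P s' := by
  obtain ⟨s, hs, -⟩ := h ⟨0, by omega⟩ ⟨1, hd⟩ (by simp [Fin.lt_def])
  by_contra! hne
  have hmono : StrictMono fun j => a j s := fun j j' hjj' => by
    obtain ⟨s', hs', hlt⟩ := h j j' hjj'
    obtain rfl : s' = s := by_contra fun h' => hne s' s h' hs' hs
    exact hlt
  have := Fintype.card_le_of_injective _ hmono.injective
  simp only [Fintype.card_fin] at this
  omega

theorem exists_ne_forall_eq_true_of_monotone {ι : Type*} {d N : ℕ} (hd : 2 ≤ d)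
    (e : ι → Fin N → Bool) (c : Fin d → Fin ((d - 1) ^ N)) (hc : StrictMono c)
    (hmono : ∀ i, Monotone fun j => flipDigits (e i) (c j)) :
    ∃ s s', s ≠ s' ∧ (∀ i, e i s = true) ∧ ∀ i, e i s' = true := by
  refine Fin.exists_ne_of_forall_exists_lt (by omega) (by omega) (fun s => ∀ i, e i s = true)
    (fun j => finFunctionFinEquiv.symm (c j)) fun j j' hjj' => ?_
  obtain ⟨s, hlt, hflip⟩ := exists_digit_lt_and_flipDigits_lt (hc hjj')
  refine ⟨s, fun i => ?_, hlt⟩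
  by_contra hne
  exact (hflip (e i) (by simpa using hne)).not_ge (hmono i hjj'.le)

theorem family_to_array_general (k l t N d : ℕ)
    (hd : 2 ≤ d)
    (hF : ∃ F : Finset (Fin (k + l + t) → Bool), F.card = N ∧
      (∀ u ∈ F, ∀ v ∈ F, u ≠ v →
        ¬ ∃ s : Finset (Fin (k + l + t)), s.card = k ∧ ∀ i ∈ s, u i = true ∧ v i = true) ∧
      (∀ u ∈ F, ∀ v ∈ F, u ≠ v →
        ¬ ∃ s : Finset (Fin (k + l + t)), s.card = l ∧ ∀ i ∈ s, u i = false ∧ v i = false)) :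
    ∃ A : Fin (k + l + t) → Fin ((d - 1) ^ N) → ℝ,
      (¬ ∃ r : Fin k → Fin (k + l + t), ∃ c : Fin d → Fin ((d - 1) ^ N),
          StrictMono r ∧ StrictMono c ∧
          ∀ j j' : Fin d, j ≤ j' → ∀ i : Fin k, A (r i) (c j) ≤ A (r i) (c j')) ∧
      (¬ ∃ r : Fin l → Fin (k + l + t), ∃ c : Fin d → Fin ((d - 1) ^ N),
          StrictMono r ∧ StrictMono c ∧
          ∀ j j' : Fin d, j ≤ j' → ∀ i : Fin l, A (r i) (c j') ≤ A (r i) (c j)) := by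
  obtain ⟨F, hcard, hones, hzeros⟩ := hF
  let E : Fin N ≃ F := (F.equivFinOfCardEq hcard).symm
  have hE {s s' : Fin N} (h : s ≠ s') : (E s : Fin (k + l + t) → Bool) ≠ E s' :=
    fun h' => h (E.injective (Subtype.ext h'))
  refine ⟨fun ρ x => (flipDigits (fun s => (E s : Fin (k + l + t) → Bool) ρ) x : ℕ), ?_, ?_⟩
  · rintro ⟨r, c, hr, hc, hmono⟩
    obtain ⟨s, s', hne, hs, hs'⟩ := exists_ne_forall_eq_true_of_monotone hd
      (fun i s => (E s : Fin (k + l + t) → Bool) (r i)) c hc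
      fun i j j' hjj' => by simpa using hmono j j' hjj' i
    exact hones _ (E s).2 _ (E s').2 (hE hne)
      ⟨univ.map ⟨r, hr.injective⟩, by simp, by simp [hs, hs']⟩
  · have : NeZero (d - 1) := ⟨by omega⟩
    rintro ⟨r, c, hr, hc, hmono⟩
    obtain ⟨s, s', hne, hs, hs'⟩ := exists_ne_forall_eq_true_of_monotone hd
      (fun i s => !(E s : Fin (k + l + t) → Bool) (r i)) c hc
      fun i j j' hjj' => by simpa [flipDigits_not] using hmono j j' hjj' i
    exact hzeros _ (E s).2 _ (E s').2 (hE hne)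
      ⟨univ.map ⟨r, hr.injective⟩, by simp, by simp_all⟩

/-- If there is a family of N binary vectors of length k+l+t in which no two
distinct vectors share k common ones and no two share l common zeros, then
there is a real array of size (k+l+t) × (d-1)^N with no k × d subarray whose
columns increase in ℝ^k and no l × d subarray whose columns decrease in ℝ^l. -/
theorem family_to_array (k l t N d : ℕ) (hk : 1 ≤ k) (hl : 1 ≤ l) (ht : 1 ≤ t)
    (hd : 2 ≤ d)
    (hF : ∃ F : Finset (Fin (k + l + t) → Bool), F.card = N ∧
      (∀ u ∈ F, ∀ v ∈ F, u ≠ v →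
        ¬ ∃ s : Finset (Fin (k + l + t)), s.card = k ∧ ∀ i ∈ s, u i = true ∧ v i = true) ∧
      (∀ u ∈ F, ∀ v ∈ F, u ≠ v →
        ¬ ∃ s : Finset (Fin (k + l + t)), s.card = l ∧ ∀ i ∈ s, u i = false ∧ v i = false)) :
    ∃ A : Fin (k + l + t) → Fin ((d - 1) ^ N) → ℝ,
      (¬ ∃ r : Fin k → Fin (k + l + t), ∃ c : Fin d → Fin ((d - 1) ^ N),
          StrictMono r ∧ StrictMono c ∧
          ∀ j j' : Fin d, j ≤ j' → ∀ i : Fin k, A (r i) (c j) ≤ A (r i) (c j')) ∧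
      (¬ ∃ r : Fin l → Fin (k + l + t), ∃ c : Fin d → Fin ((d - 1) ^ N),
          StrictMono r ∧ StrictMono c ∧
          ∀ j j' : Fin d, j ≤ j' → ∀ i : Fin l, A (r i) (c j') ≤ A (r i) (c j)) :=
  family_to_array_general k l t N d hd hF
end

section
/- Let q ≥ 1, d ≥ 2, and let A be a binary matrix with k+l rows and q columns. Define the (k+l) × (d-1)^q real array B whose j-th row is the permutation of [(d-1)^q] obtained by, for each i from q down to 1, ordering the (d-1) sub-blocks of size (d-1)^{i-1} inside each block of size (d-1)^i increasingly if A_{j,i} = 1 and decreasingly if A_{j,i} = 0. If B contains a k × d subarray whose columns form an increasing sequence in R^k using rows r_1, ..., r_k, then A contains a k × 2 subarray on rows r_1, ..., r_k all of whose entries equal 1. -/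
private lemma low_sum_lt (e m : ℕ) (f : ℕ → ℕ) (hf : ∀ i, i < m → f i < e) :
    ∑ i ∈ Finset.range m, f i * e ^ i < e ^ m := by
  induction m with
  | zero => simp
  | succ m ih =>
    rw [Finset.sum_range_succ]
    have h1 : ∑ i ∈ Finset.range m, f i * e ^ i < e ^ m :=
      ih (fun i hi => hf i (by omega))
    have hfm := hf m (by omega)
    obtain ⟨e', rfl⟩ : ∃ e', e = e' + 1 := ⟨e - 1, by omega⟩
    have h2 : f m * (e' + 1) ^ m ≤ e' * (e' + 1) ^ m :=
      Nat.mul_le_mul_right _ (by omega)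
    have h3 : (e' + 1) ^ (m + 1) = (e' + 1) ^ m + e' * (e' + 1) ^ m := by ring
    omega

private lemma sum_lt_sum_digits (e q m : ℕ) (hm : m < q) (f g : ℕ → ℕ)
    (hflow : ∀ i, i < m → f i < e)
    (heq : ∀ i, m < i → i < q → f i = g i)
    (hlt : f m < g m) :
    ∑ i ∈ Finset.range q, f i * e ^ i < ∑ i ∈ Finset.range q, g i * e ^ i := by
  have hdecomp : ∀ h : ℕ → ℕ, ∑ i ∈ Finset.range q, h i * e ^ i
      = ((∑ i ∈ Finset.range m, h i * e ^ i) + h m * e ^ m)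
        + ∑ i ∈ Finset.Ico (m + 1) q, h i * e ^ i := by
    intro h
    rw [← Finset.sum_range_succ, Finset.sum_range_add_sum_Ico _ (by omega : m + 1 ≤ q)]
  rw [hdecomp f, hdecomp g]
  have hIco : ∑ i ∈ Finset.Ico (m + 1) q, f i * e ^ i
      = ∑ i ∈ Finset.Ico (m + 1) q, g i * e ^ i :=
    Finset.sum_congr rfl fun i hi => by
      rw [Finset.mem_Ico] at hi; rw [heq i hi.1 hi.2]
  have h1 := low_sum_lt e m f hflow
  have h2 : f m * e ^ m + e ^ m ≤ g m * e ^ m := by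
    calc f m * e ^ m + e ^ m = (f m + 1) * e ^ m := by ring
    _ ≤ g m * e ^ m := Nat.mul_le_mul_right _ (by omega)
  omega

private lemma digits_rep (e : ℕ) (he : 1 ≤ e) :
    ∀ q x : ℕ, x < e ^ q → ∑ i ∈ Finset.range q, x / e ^ i % e * e ^ i = x := by
  intro q
  induction q with
  | zero =>
    intro x hx
    simp only [pow_zero] at hx
    simp only [Finset.range_zero, Finset.sum_empty]
    omega
  | succ q ih =>
    intro x hx
    rw [Finset.sum_range_succ']
    have hx' : x / e < e ^ q := by
      rw [Nat.div_lt_iff_lt_mul (by omega)]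
      calc x < e ^ (q + 1) := hx
        _ = e ^ q * e := pow_succ e q
    have hterm : ∀ i, x / e ^ (i + 1) % e * e ^ (i + 1)
        = x / e / e ^ i % e * e ^ i * e := by
      intro i
      rw [Nat.div_div_eq_div_mul, ← pow_succ']
      rw [pow_succ]
      ring
    calc (∑ i ∈ Finset.range q, x / e ^ (i + 1) % e * e ^ (i + 1)) + x / e ^ 0 % e * e ^ 0
        = (∑ i ∈ Finset.range q, x / e / e ^ i % e * e ^ i) * e + x % e := by
          rw [Finset.sum_mul]
          simp only [hterm, pow_zero, Nat.div_one, mul_one]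
      _ = x / e * e + x % e := by rw [ih _ hx']
      _ = x := by rw [mul_comm]; exact Nat.div_add_mod x e

private lemma lt_of_top_digit_lt (e q m x y : ℕ) (he : 1 ≤ e) (hm : m < q)
    (hx : x < e ^ q) (hy : y < e ^ q)
    (heq : ∀ i, m < i → i < q → x / e ^ i % e = y / e ^ i % e)
    (hlt : x / e ^ m % e < y / e ^ m % e) : x < y := by
  rw [← digits_rep e he q x hx, ← digits_rep e he q y hy]
  exact sum_lt_sum_digits e q m hm _ _ (fun i _ => Nat.mod_lt _ (by omega)) heq hlt

/-- Let B be the (k+l) × (d-1)^q array whose j-th row is the permutation of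
{0, …, (d-1)^q - 1} obtained by ordering, at each scale i, the d-1 sub-blocks
of size (d-1)^(i-1) inside each block of size (d-1)^i increasingly when
A j i = true and decreasingly when A j i = false (equivalently, by keeping or
reflecting each base-(d-1) digit of the position).  If B has a k × d subarray
on rows r 0, …, r (k-1) whose columns form an increasing sequence in ℝ^k (here
ℕ-valued), then A has a k × 2 subarray on those rows all of whose entries are
true. -/
theorem construction_forces_ones (k l q d : ℕ) (hk : 1 ≤ k) (hl : 1 ≤ l)
    (hq : 1 ≤ q) (hd : 2 ≤ d)
    (A : Fin (k + l) → Fin q → Bool)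
    (B : Fin (k + l) → Fin ((d - 1) ^ q) → ℕ)
    (hB : B = fun (j : Fin (k + l)) (p : Fin ((d - 1) ^ q)) => ∑ i : Fin q,
      (if A j i = true
        then (p : ℕ) / (d - 1) ^ (i : ℕ) % (d - 1)
        else (d - 2) - (p : ℕ) / (d - 1) ^ (i : ℕ) % (d - 1)) * (d - 1) ^ (i : ℕ))
    (r : Fin k → Fin (k + l)) (hr : StrictMono r)
    (c : Fin d → Fin ((d - 1) ^ q)) (hc : StrictMono c)
    (hinc : ∀ j j' : Fin d, j ≤ j' → ∀ i : Fin k, B (r i) (c j) ≤ B (r i) (c j')) :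
    ∃ s : Fin 2 → Fin q, StrictMono s ∧
      ∀ (i : Fin k) (m : Fin 2), A (r i) (s m) = true := by
  subst hB
  have hd0 : 0 < d := by omega
  have hd1 : 1 < d := by omega
  have hcc : ((c ⟨0, hd0⟩ : Fin ((d - 1) ^ q)) : ℕ) < ((c ⟨1, hd1⟩ : Fin ((d - 1) ^ q)) : ℕ) :=
    hc (Fin.mk_lt_mk.mpr (by omega))
  have hlt1 := (c ⟨1, hd1⟩).isLt
  have he2 : 2 ≤ d - 1 := by
    by_contra h
    have hle : (d - 1) ^ q ≤ 1 := by
      calc (d - 1) ^ q ≤ 1 ^ q := Nat.pow_le_pow_left (by omega) q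
        _ = 1 := one_pow q
    omega
  have digit_lt : ∀ (mm : ℕ) (p : Fin ((d - 1) ^ q)),
      (p : ℕ) / (d - 1) ^ mm % (d - 1) < d - 1 :=
    fun mm p => Nat.mod_lt _ (by omega)
  -- for each increasing pair of columns, a top differing digit
  have pairKey : ∀ a b : Fin d, a < b → ∃ mm, mm < q ∧
      (c a : ℕ) / (d - 1) ^ mm % (d - 1) < (c b : ℕ) / (d - 1) ^ mm % (d - 1) ∧
      ∀ i, mm < i → i < q →
        (c a : ℕ) / (d - 1) ^ i % (d - 1) = (c b : ℕ) / (d - 1) ^ i % (d - 1) := by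
    intro a b hab
    have hval : (c a : ℕ) < (c b : ℕ) := hc hab
    have hne : ((Finset.range q).filter
        (fun i => (c a : ℕ) / (d - 1) ^ i % (d - 1) ≠ (c b : ℕ) / (d - 1) ^ i % (d - 1))).Nonempty := by
      by_contra h
      rw [Finset.not_nonempty_iff_eq_empty, Finset.filter_eq_empty_iff] at h
      have : (c a : ℕ) = (c b : ℕ) := by
        rw [← digits_rep (d - 1) (by omega) q _ (c a).isLt,
            ← digits_rep (d - 1) (by omega) q _ (c b).isLt]
        refine Finset.sum_congr rfl fun i hi => ?_
        have h3 := h hi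
        rw [not_not] at h3
        rw [h3]
      omega
    obtain ⟨hmq', hdiff⟩ := Finset.mem_filter.mp (Finset.max'_mem _ hne)
    rw [Finset.mem_range] at hmq'
    have habove : ∀ i, Finset.max' _ hne < i → i < q →
        (c a : ℕ) / (d - 1) ^ i % (d - 1) = (c b : ℕ) / (d - 1) ^ i % (d - 1) := by
      intro i h1 h2
      by_contra hne2
      have hiS : i ∈ (Finset.range q).filter
          (fun i => (c a : ℕ) / (d - 1) ^ i % (d - 1) ≠ (c b : ℕ) / (d - 1) ^ i % (d - 1)) := by
        rw [Finset.mem_filter, Finset.mem_range]; exact ⟨h2, hne2⟩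
      have := Finset.le_max' _ i hiS
      omega
    refine ⟨Finset.max' _ hne, hmq', ?_, habove⟩
    rcases Nat.lt_trichotomy ((c a : ℕ) / (d - 1) ^ (Finset.max' _ hne) % (d - 1))
      ((c b : ℕ) / (d - 1) ^ (Finset.max' _ hne) % (d - 1)) with h | h | h
    · exact h
    · exact absurd h hdiff
    · exfalso
      have := lt_of_top_digit_lt (d - 1) q (Finset.max' _ hne) (c b : ℕ) (c a : ℕ) (by omega) hmq'
        (c b).isLt (c a).isLt (fun i h1 h2 => (habove i h1 h2).symm) h
      omega
  -- monotonicity of B rows forces A to be true at the top differing scale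
  have rowKey : ∀ a b : Fin d, a < b → ∀ mm, ∀ hmq : mm < q,
      (c a : ℕ) / (d - 1) ^ mm % (d - 1) < (c b : ℕ) / (d - 1) ^ mm % (d - 1) →
      (∀ i, mm < i → i < q →
        (c a : ℕ) / (d - 1) ^ i % (d - 1) = (c b : ℕ) / (d - 1) ^ i % (d - 1)) →
      ∀ i : Fin k, A (r i) ⟨mm, hmq⟩ = true := by
    intro a b hab mm hmq hdig habove i
    by_contra hA
    rw [Bool.not_eq_true] at hA
    have hBle : (∑ t : Fin q, (if A (r i) t = true
          then (c a : ℕ) / (d - 1) ^ (t : ℕ) % (d - 1)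
          else (d - 2) - (c a : ℕ) / (d - 1) ^ (t : ℕ) % (d - 1)) * (d - 1) ^ (t : ℕ))
        ≤ (∑ t : Fin q, (if A (r i) t = true
          then (c b : ℕ) / (d - 1) ^ (t : ℕ) % (d - 1)
          else (d - 2) - (c b : ℕ) / (d - 1) ^ (t : ℕ) % (d - 1)) * (d - 1) ^ (t : ℕ)) :=
      hinc a b (le_of_lt hab) i
    have hform : ∀ p : Fin ((d - 1) ^ q),
        (∑ t : Fin q, (if A (r i) t = true
          then (p : ℕ) / (d - 1) ^ (t : ℕ) % (d - 1)
          else (d - 2) - (p : ℕ) / (d - 1) ^ (t : ℕ) % (d - 1)) * (d - 1) ^ (t : ℕ))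
        = ∑ n ∈ Finset.range q, (if h : n < q then
            (if A (r i) ⟨n, h⟩ = true then (p : ℕ) / (d - 1) ^ n % (d - 1)
             else (d - 2) - (p : ℕ) / (d - 1) ^ n % (d - 1)) else 0) * (d - 1) ^ n := by
      intro p
      rw [← Fin.sum_univ_eq_sum_range
        (fun n => (if h : n < q then
            (if A (r i) ⟨n, h⟩ = true then (p : ℕ) / (d - 1) ^ n % (d - 1)
             else (d - 2) - (p : ℕ) / (d - 1) ^ n % (d - 1)) else 0) * (d - 1) ^ n) q]
      refine Finset.sum_congr rfl fun t _ => ?_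
      rw [dif_pos t.isLt]
    rw [hform (c a), hform (c b)] at hBle
    have hcontra := sum_lt_sum_digits (d - 1) q mm hmq
      (fun n => if h : n < q then
          (if A (r i) ⟨n, h⟩ = true then (c b : ℕ) / (d - 1) ^ n % (d - 1)
           else (d - 2) - (c b : ℕ) / (d - 1) ^ n % (d - 1)) else 0)
      (fun n => if h : n < q then
          (if A (r i) ⟨n, h⟩ = true then (c a : ℕ) / (d - 1) ^ n % (d - 1)
           else (d - 2) - (c a : ℕ) / (d - 1) ^ n % (d - 1)) else 0)
      (fun n hn => by
        beta_reduce
        rw [dif_pos (by omega : n < q)]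
        have h1 := digit_lt n (c b)
        split <;> omega)
      (fun n h1 h2 => by
        beta_reduce
        rw [dif_pos h2, dif_pos h2, habove n h1 h2])
      (by
        beta_reduce
        rw [dif_pos hmq, dif_pos hmq, hA]
        have h1 := digit_lt mm (c b)
        simp only [Bool.false_eq_true, if_false]
        omega)
    exact absurd hBle (not_le.mpr hcontra)
  -- pick scales for consecutive pairs
  choose m hmq hdig habove using fun t : Fin (d - 1) =>
    pairKey ⟨t.1, by have := t.2; omega⟩ ⟨t.1 + 1, by have := t.2; omega⟩
      (Fin.mk_lt_mk.mpr (by omega))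
  have allrows : ∀ t : Fin (d - 1), ∀ i : Fin k, A (r i) ⟨m t, hmq t⟩ = true :=
    fun t i => rowKey _ _ (Fin.mk_lt_mk.mpr (Nat.lt_succ_self _)) (m t) (hmq t)
      (hdig t) (habove t) i
  -- two distinct scales by pigeonhole
  have hex : ∃ t1 t2 : Fin (d - 1), m t1 < m t2 := by
    by_contra hno
    push_neg at hno
    have t0 : Fin (d - 1) := ⟨0, by omega⟩
    have chain : ∀ t, ∀ ht : t < d,
        t + (c ⟨0, hd0⟩ : ℕ) / (d - 1) ^ (m ⟨0, by omega⟩) % (d - 1)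
          ≤ (c ⟨t, ht⟩ : ℕ) / (d - 1) ^ (m ⟨0, by omega⟩) % (d - 1) := by
      intro t
      induction t with
      | zero => intro ht; simp
      | succ t ih =>
        intro ht
        have ht' : t < d := by omega
        have h1 := ih ht'
        have h2 : (c ⟨t, ht'⟩ : ℕ) / (d - 1) ^ (m ⟨0, by omega⟩) % (d - 1)
            < (c ⟨t + 1, ht⟩ : ℕ) / (d - 1) ^ (m ⟨0, by omega⟩) % (d - 1) := by
          have htd : t < d - 1 := by omega
          have heqm : m ⟨t, htd⟩ = m ⟨0, by omega⟩ :=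
            le_antisymm (hno _ _) (hno _ _)
          have h3 := hdig ⟨t, htd⟩
          rw [heqm] at h3
          exact h3
        omega
    have hdd : d - 1 < d := by omega
    have hlast := chain (d - 1) hdd
    have hb := digit_lt (m ⟨0, by omega⟩) (c ⟨d - 1, hdd⟩)
    omega
  obtain ⟨t1, t2, h12⟩ := hex
  refine ⟨fun x => if (x : ℕ) = 0 then ⟨m t1, hmq t1⟩ else ⟨m t2, hmq t2⟩, ?_, ?_⟩
  · intro x y hxy
    have hx := x.2
    have hy := y.2
    rw [Fin.lt_def] at hxy
    have hxy' : (x : ℕ) = 0 ∧ (y : ℕ) = 1 := by omega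
    rw [Fin.lt_def]
    simp only [hxy'.1, hxy'.2, if_pos, if_neg]
    simpa using h12
  · intro i mx
    by_cases hmx : (mx : ℕ) = 0
    · simp only [hmx, if_pos]
      exact allrows t1 i
    · simp only [hmx, if_neg]
      exact allrows t2 i
end

section
/- For every d ≥ 2 and q ≥ 1, the construction yields permutations with the following property: in a permutation of [(d-1)^q] built by recursively ordering nested blocks (blocks of size (d-1)^{i-1} within blocks of size (d-1)^i, ordered all-increasing or all-decreasing at each scale i according to a fixed sign s_i ∈ {+,-}), any d positions c_1 < ... < c_d at which the permutation values are nondecreasing force at least two distinct scales i with s_i = + at which two distinct hit sub-blocks lie in a common block; in particular if at most one scale has s_i = +, no d positions give nondecreasing values. -/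
private lemma geom_bound (m : ℕ) : ∀ n : ℕ,
    (∑ j ∈ Finset.range n, m * (m + 1) ^ j) < (m + 1) ^ n := by
  intro n
  induction n with
  | zero => simp
  | succ n ih =>
    rw [Finset.sum_range_succ, pow_succ]
    have h : (m + 1) ^ n * (m + 1) = (m + 1) ^ n + m * (m + 1) ^ n := by ring
    linarith

private lemma sum_lt_of_scale (q m : ℕ) (s : Fin q → Bool) (i : Fin q) (x y : ℕ)
    (hhigh : ∀ j : Fin q, (i : ℕ) < (j : ℕ) → x / (m+1) ^ (j:ℕ) = y / (m+1) ^ (j:ℕ))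
    (hlt : (if s i = true then x / (m+1) ^ (i:ℕ) % (m+1) else m - x / (m+1) ^ (i:ℕ) % (m+1))
         < (if s i = true then y / (m+1) ^ (i:ℕ) % (m+1) else m - y / (m+1) ^ (i:ℕ) % (m+1))) :
    ∑ j : Fin q, (if s j = true then x / (m+1) ^ (j:ℕ) % (m+1)
        else m - x / (m+1) ^ (j:ℕ) % (m+1)) * (m+1) ^ (j:ℕ)
    < ∑ j : Fin q, (if s j = true then y / (m+1) ^ (j:ℕ) % (m+1)
        else m - y / (m+1) ^ (j:ℕ) % (m+1)) * (m+1) ^ (j:ℕ) := by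
  classical
  have hsplit : ∀ z : ℕ,
      (∑ j : Fin q, (if s j = true then z / (m+1) ^ (j:ℕ) % (m+1)
          else m - z / (m+1) ^ (j:ℕ) % (m+1)) * (m+1) ^ (j:ℕ))
      = (∑ j ∈ Finset.univ.filter (fun j : Fin q => (i:ℕ) < (j:ℕ)),
          (if s j = true then z / (m+1) ^ (j:ℕ) % (m+1)
          else m - z / (m+1) ^ (j:ℕ) % (m+1)) * (m+1) ^ (j:ℕ))
        + ((if s i = true then z / (m+1) ^ (i:ℕ) % (m+1)
          else m - z / (m+1) ^ (i:ℕ) % (m+1)) * (m+1) ^ (i:ℕ)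
        + ∑ j ∈ Finset.univ.filter (fun j : Fin q => (j:ℕ) < (i:ℕ)),
          (if s j = true then z / (m+1) ^ (j:ℕ) % (m+1)
          else m - z / (m+1) ^ (j:ℕ) % (m+1)) * (m+1) ^ (j:ℕ)) := by
    intro z
    rw [← Finset.sum_filter_add_sum_filter_not Finset.univ (fun j : Fin q => (i:ℕ) < (j:ℕ))]
    congr 1
    have h1 : Finset.univ.filter (fun j : Fin q => ¬ (i:ℕ) < (j:ℕ))
        = insert i (Finset.univ.filter (fun j : Fin q => (j:ℕ) < (i:ℕ))) := by
      ext j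
      simp [Fin.ext_iff]
      omega
    rw [h1, Finset.sum_insert (by simp)]
  have hHi : (∑ j ∈ Finset.univ.filter (fun j : Fin q => (i:ℕ) < (j:ℕ)),
          (if s j = true then x / (m+1) ^ (j:ℕ) % (m+1)
          else m - x / (m+1) ^ (j:ℕ) % (m+1)) * (m+1) ^ (j:ℕ))
      = (∑ j ∈ Finset.univ.filter (fun j : Fin q => (i:ℕ) < (j:ℕ)),
          (if s j = true then y / (m+1) ^ (j:ℕ) % (m+1)
          else m - y / (m+1) ^ (j:ℕ) % (m+1)) * (m+1) ^ (j:ℕ)) := by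
    refine Finset.sum_congr rfl fun j hj => ?_
    have hj' : (i:ℕ) < (j:ℕ) := by simpa using hj
    rw [hhigh j hj']
  have hLo : ∀ z : ℕ,
      (∑ j ∈ Finset.univ.filter (fun j : Fin q => (j:ℕ) < (i:ℕ)),
          (if s j = true then z / (m+1) ^ (j:ℕ) % (m+1)
          else m - z / (m+1) ^ (j:ℕ) % (m+1)) * (m+1) ^ (j:ℕ)) < (m+1) ^ (i:ℕ) := by
    intro z
    have h1 : (∑ j ∈ Finset.univ.filter (fun j : Fin q => (j:ℕ) < (i:ℕ)),
          (if s j = true then z / (m+1) ^ (j:ℕ) % (m+1)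
          else m - z / (m+1) ^ (j:ℕ) % (m+1)) * (m+1) ^ (j:ℕ))
        ≤ ∑ j ∈ Finset.univ.filter (fun j : Fin q => (j:ℕ) < (i:ℕ)), m * (m+1) ^ (j:ℕ) := by
      refine Finset.sum_le_sum fun j _ => Nat.mul_le_mul_right _ ?_
      by_cases hsj : s j = true
      · simp only [hsj, if_true]
        have := Nat.mod_lt (z / (m+1) ^ (j:ℕ)) (show 0 < m + 1 by omega)
        omega
      · simp only [hsj, if_false]
        exact Nat.sub_le _ _
    have h2 : (∑ j ∈ Finset.univ.filter (fun j : Fin q => (j:ℕ) < (i:ℕ)), m * (m+1) ^ (j:ℕ))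
        = ∑ j ∈ Finset.range (i:ℕ), m * (m+1) ^ j := by
      rw [Finset.sum_filter, Fin.sum_univ_eq_sum_range (fun j => if j < (i:ℕ) then m * (m+1) ^ j else 0) q]
      have h3 : (∑ j ∈ Finset.range q, (if j < (i:ℕ) then m * (m+1) ^ j else 0))
          = ∑ j ∈ Finset.range (i:ℕ), (if j < (i:ℕ) then m * (m+1) ^ j else 0) :=
        (Finset.sum_subset (Finset.range_subset_range.mpr i.isLt.le)
          (fun x _ hx => by rw [if_neg]; simpa using hx)).symm
      rw [h3]
      exact Finset.sum_congr rfl fun j hj => if_pos (Finset.mem_range.mp hj)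
    calc _ ≤ _ := h1
      _ = _ := h2
      _ < _ := geom_bound m (i:ℕ)
  rw [hsplit x, hsplit y, hHi]
  have l1 := hLo x
  have l2 := hLo y
  set E := (m+1) ^ (i:ℕ) with hE
  set Dx := (if s i = true then x / (m+1) ^ (i:ℕ) % (m+1)
      else m - x / (m+1) ^ (i:ℕ) % (m+1)) with hDx
  set Dy := (if s i = true then y / (m+1) ^ (i:ℕ) % (m+1)
      else m - y / (m+1) ^ (i:ℕ) % (m+1)) with hDy
  set H := ∑ j ∈ Finset.univ.filter (fun j : Fin q => (i:ℕ) < (j:ℕ)),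
      (if s j = true then y / (m+1) ^ (j:ℕ) % (m+1)
      else m - y / (m+1) ^ (j:ℕ) % (m+1)) * (m+1) ^ (j:ℕ) with hH
  set Lx := ∑ j ∈ Finset.univ.filter (fun j : Fin q => (j:ℕ) < (i:ℕ)),
      (if s j = true then x / (m+1) ^ (j:ℕ) % (m+1)
      else m - x / (m+1) ^ (j:ℕ) % (m+1)) * (m+1) ^ (j:ℕ) with hLx
  set Ly := ∑ j ∈ Finset.univ.filter (fun j : Fin q => (j:ℕ) < (i:ℕ)),
      (if s j = true then y / (m+1) ^ (j:ℕ) % (m+1)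
      else m - y / (m+1) ^ (j:ℕ) % (m+1)) * (m+1) ^ (j:ℕ) with hLy
  have hmul : (Dx + 1) * E ≤ Dy * E := Nat.mul_le_mul_right _ hlt
  calc H + (Dx * E + Lx) < H + (Dx * E + E) :=
        Nat.add_lt_add_left (Nat.add_lt_add_left l1 _) _
    _ = H + (Dx + 1) * E := by ring
    _ ≤ H + Dy * E := Nat.add_le_add_left hmul _
    _ ≤ H + (Dy * E + Ly) := Nat.add_le_add_left (Nat.le_add_right _ _) _


private lemma key_compare (q e m : ℕ) (hm : m + 1 = e) (s : Fin q → Bool) (i : Fin q) (a b : ℕ)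
    (hq : a / e ^ ((i:ℕ) + 1) = b / e ^ ((i:ℕ) + 1))
    (hdig : a / e ^ (i:ℕ) % e < b / e ^ (i:ℕ) % e) :
    (s i = true →
      ∑ j : Fin q, (if s j = true then a / e ^ (j:ℕ) % e else m - a / e ^ (j:ℕ) % e) * e ^ (j:ℕ)
      < ∑ j : Fin q, (if s j = true then b / e ^ (j:ℕ) % e else m - b / e ^ (j:ℕ) % e) * e ^ (j:ℕ)) ∧
    (s i = false →
      ∑ j : Fin q, (if s j = true then b / e ^ (j:ℕ) % e else m - b / e ^ (j:ℕ) % e) * e ^ (j:ℕ)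
      < ∑ j : Fin q, (if s j = true then a / e ^ (j:ℕ) % e else m - a / e ^ (j:ℕ) % e) * e ^ (j:ℕ)) := by
  subst hm
  have hhigh : ∀ j : Fin q, (i:ℕ) < (j:ℕ) → a / (m+1) ^ (j:ℕ) = b / (m+1) ^ (j:ℕ) := by
    intro j hj
    have hpow : (m+1) ^ (j:ℕ) = (m+1) ^ ((i:ℕ)+1) * (m+1) ^ ((j:ℕ) - ((i:ℕ)+1)) := by
      rw [← pow_add]; congr 1; omega
    rw [hpow, ← Nat.div_div_eq_div_mul, hq, Nat.div_div_eq_div_mul]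
  constructor
  · intro hsi
    exact sum_lt_of_scale q m s i a b hhigh (by simpa [hsi] using hdig)
  · intro hsi
    have hdb : b / (m+1) ^ (i:ℕ) % (m+1) ≤ m := by
      have := Nat.mod_lt (b / (m+1) ^ (i:ℕ)) (show 0 < m + 1 by omega)
      omega
    refine sum_lt_of_scale q m s i b a (fun j hj => (hhigh j hj).symm) ?_
    simp only [hsi]
    simp only [Bool.false_eq_true, if_false]
    omega

private lemma top_diff (e q a b : ℕ) (he : 0 < e) (ha : a < e ^ q) (hb : b < e ^ q)
    (hab : a < b) :
    ∃ i : ℕ, i < q ∧ a / e ^ (i+1) = b / e ^ (i+1) ∧ a / e ^ i ≠ b / e ^ i ∧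
      a / e ^ i % e < b / e ^ i % e := by
  classical
  set P : ℕ → Prop := fun i => a / e ^ i ≠ b / e ^ i with hP
  have hP0 : P 0 := by simpa [hP] using hab.ne
  have hPi : P (Nat.findGreatest P q) := Nat.findGreatest_spec (Nat.zero_le q) hP0
  have hPq : ¬ P q := by simp [hP, Nat.div_eq_of_lt ha, Nat.div_eq_of_lt hb]
  have hle : Nat.findGreatest P q ≤ q := Nat.findGreatest_le q
  have hlt : Nat.findGreatest P q < q := by
    rcases lt_or_eq_of_le hle with h | h
    · exact h
    · exact absurd (h ▸ hPi) hPq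
  set i := Nat.findGreatest P q with hi
  have hsucc : ¬ P (i + 1) := Nat.findGreatest_is_greatest (Nat.lt_succ_self i) hlt
  have heq : a / e ^ (i+1) = b / e ^ (i+1) := not_not.mp hsucc
  have hdd : a / e ^ i / e = b / e ^ i / e := by
    rw [Nat.div_div_eq_div_mul, Nat.div_div_eq_div_mul, ← pow_succ]
    exact heq
  have h1 : a / e ^ i < b / e ^ i :=
    lt_of_le_of_ne (Nat.div_le_div_right hab.le) hPi
  have h2 := Nat.div_add_mod (a / e ^ i) e
  have h3 := Nat.div_add_mod (b / e ^ i) e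
  rw [hdd] at h2
  have h4 : e * (b / e ^ i / e) + a / e ^ i % e < e * (b / e ^ i / e) + b / e ^ i % e := by
    rw [h2, h3]; exact h1
  exact ⟨i, hlt, heq, hPi, Nat.lt_of_add_lt_add_left h4⟩


/-- Let B be the permutation of {0, …, (d-1)^q - 1} built from signs
s : Fin q → Bool by ordering, at each scale i, the d-1 sub-blocks of size
(d-1)^i inside each block of size (d-1)^(i+1) increasingly when s i = true and
decreasingly when s i = false (equivalently by keeping or reflecting each
base-(d-1) digit).  Then any d positions c 0 < … < c (d-1) at which B is
nondecreasing force two distinct scales with sign +, at each of which two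
distinct hit sub-blocks lie in a common block; in particular, if at most one
scale has sign +, no d positions carry nondecreasing values. -/
theorem signs_force_two_plus_scales (q d : ℕ) (hq : 1 ≤ q) (hd : 2 ≤ d)
    (s : Fin q → Bool) (B : Fin ((d - 1) ^ q) → ℕ)
    (hB : B = fun (p : Fin ((d - 1) ^ q)) => ∑ i : Fin q,
      (if s i = true
        then (p : ℕ) / (d - 1) ^ (i : ℕ) % (d - 1)
        else (d - 2) - (p : ℕ) / (d - 1) ^ (i : ℕ) % (d - 1)) * (d - 1) ^ (i : ℕ)) :
    (∀ c : Fin d → Fin ((d - 1) ^ q), StrictMono c → Monotone (B ∘ c) →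
      ∃ i₁ i₂ : Fin q, i₁ ≠ i₂ ∧ s i₁ = true ∧ s i₂ = true ∧
        ∀ i ∈ ({i₁, i₂} : Set (Fin q)), ∃ j j' : Fin d,
          (c j : ℕ) / (d - 1) ^ ((i : ℕ) + 1) = (c j' : ℕ) / (d - 1) ^ ((i : ℕ) + 1) ∧
          (c j : ℕ) / (d - 1) ^ (i : ℕ) ≠ (c j' : ℕ) / (d - 1) ^ (i : ℕ)) ∧
    ((Finset.univ.filter fun i : Fin q => s i = true).card ≤ 1 →
      ∀ c : Fin d → Fin ((d - 1) ^ q), StrictMono c → ¬ Monotone (B ∘ c)) := by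
  have he : 0 < d - 1 := by omega
  have main : ∀ c : Fin d → Fin ((d - 1) ^ q), StrictMono c → Monotone (B ∘ c) →
      ∃ i₁ i₂ : Fin q, i₁ ≠ i₂ ∧ s i₁ = true ∧ s i₂ = true ∧
        ∀ i ∈ ({i₁, i₂} : Set (Fin q)), ∃ j j' : Fin d,
          (c j : ℕ) / (d - 1) ^ ((i : ℕ) + 1) = (c j' : ℕ) / (d - 1) ^ ((i : ℕ) + 1) ∧
          (c j : ℕ) / (d - 1) ^ (i : ℕ) ≠ (c j' : ℕ) / (d - 1) ^ (i : ℕ) := by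
    intro c hsc hmono
    have hstep : ∀ k : ℕ, ∀ hk : k + 1 < d, ∃ i : Fin q, s i = true ∧
        (c ⟨k, Nat.lt_of_succ_lt hk⟩ : ℕ) / (d - 1) ^ ((i:ℕ)+1)
          = (c ⟨k+1, hk⟩ : ℕ) / (d - 1) ^ ((i:ℕ)+1) ∧
        (c ⟨k, Nat.lt_of_succ_lt hk⟩ : ℕ) / (d - 1) ^ (i:ℕ)
          ≠ (c ⟨k+1, hk⟩ : ℕ) / (d - 1) ^ (i:ℕ) ∧
        (c ⟨k, Nat.lt_of_succ_lt hk⟩ : ℕ) / (d - 1) ^ (i:ℕ) % (d-1)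
          < (c ⟨k+1, hk⟩ : ℕ) / (d - 1) ^ (i:ℕ) % (d-1) := by
      intro k hk
      have hlt : (c ⟨k, Nat.lt_of_succ_lt hk⟩ : ℕ) < (c ⟨k+1, hk⟩ : ℕ) :=
        hsc (Fin.mk_lt_mk.mpr (Nat.lt_succ_self k))
      obtain ⟨i, hiq, hdiv, hne, hdig⟩ :=
        top_diff (d-1) q _ _ he (c _).isLt (c _).isLt hlt
      refine ⟨⟨i, hiq⟩, ?_, hdiv, hne, hdig⟩
      by_contra hsf
      have hsf' : s ⟨i, hiq⟩ = false := by
        cases h : s ⟨i, hiq⟩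
        · rfl
        · exact absurd h hsf
      have hcmp := (key_compare q (d-1) (d-2) (by omega) s ⟨i,hiq⟩ _ _ hdiv hdig).2 hsf'
      have hle := hmono (show (⟨k, Nat.lt_of_succ_lt hk⟩ : Fin d) ≤ ⟨k+1, hk⟩ from
        Fin.mk_le_mk.mpr (Nat.le_succ k))
      simp only [hB, Function.comp_apply] at hle
      exact absurd hle (not_le.mpr hcmp)
    choose I hsI hdiv hne hdig using hstep
    by_cases hall : ∀ (k k' : ℕ) (hk : k + 1 < d) (hk' : k' + 1 < d), I k hk = I k' hk'
    · exfalso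
      have h0 : 0 + 1 < d := by omega
      have chain : ∀ n : ℕ, ∀ hn : n < d,
          n ≤ (c ⟨n, hn⟩ : ℕ) / (d - 1) ^ ((I 0 h0 : ℕ)) % (d - 1) := by
        intro n
        induction n with
        | zero => exact fun _ => Nat.zero_le _
        | succ n ih =>
          intro hn
          have h1 := hdig n hn
          rw [hall n 0 hn h0] at h1
          exact Nat.succ_le_of_lt (lt_of_le_of_lt (ih (Nat.lt_of_succ_lt hn)) h1)
      have h1 := chain (d-1) (by omega)
      have h2 : (c ⟨d-1, by omega⟩ : ℕ) / (d-1) ^ ((I 0 h0 : ℕ)) % (d-1) < d - 1 :=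
        Nat.mod_lt _ he
      exact absurd (lt_of_le_of_lt h1 h2) (lt_irrefl _)
    · push_neg at hall
      obtain ⟨k, k', hk, hk', hII⟩ := hall
      refine ⟨I k hk, I k' hk', hII, hsI k hk, hsI k' hk', ?_⟩
      intro i hi
      simp only [Set.mem_insert_iff, Set.mem_singleton_iff] at hi
      rcases hi with rfl | rfl
      · exact ⟨⟨k, Nat.lt_of_succ_lt hk⟩, ⟨k+1, hk⟩, hdiv k hk, hne k hk⟩
      · exact ⟨⟨k', Nat.lt_of_succ_lt hk'⟩, ⟨k'+1, hk'⟩, hdiv k' hk', hne k' hk'⟩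
  refine ⟨main, ?_⟩
  intro hcard c hsc hmono
  obtain ⟨i₁, i₂, hne12, h1, h2, -⟩ := main c hsc hmono
  have hlt : 1 < (Finset.univ.filter fun i : Fin q => s i = true).card :=
    Finset.one_lt_card.mpr ⟨i₁, by simp [h1], i₂, by simp [h2], hne12⟩
  omega
end
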